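/- arXiv:2507.12147 — 4 statements merged into one kernel-verified Lean document; each statement's English description precedes it below -/
import Mathlib

section
/- Let r ≥ 0 and set a = 2 e^{4r} ‖σ‖_{L^p[0,1]}³. Then for every μ ∈ ℂ with Im μ > −r, every continuous function z : [0,1] → ℂ, and every integer n ≥ 0, one has sup_{x∈[0,1]} |(K₁^{2n} z)(x)| ≤ aⁿ γ₁(μ)ⁿ · sup_{x∈[0,1]} |z(x)|. -/
open MeasureTheory Set
open scoped ENNReal

noncomputable section

/-- The integral operator `K₁` associated with the Dirac system. -/
def K1 (σ₁ σ₂ : ℝ → ℂ) (μ : ℂ) (z : ℝ → ℂ) : ℝ → ℂ := fun x =>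
  ∫ t in (0:ℝ)..x, σ₁ t * ∫ s in t..(1:ℝ),
    Complex.exp (2 * Complex.I * μ * (s - t)) * σ₂ s * z s

/-- The integral operator `K₂` associated with the Dirac system. -/
def K2 (σ₁ σ₂ : ℝ → ℂ) (μ : ℂ) (z : ℝ → ℂ) : ℝ → ℂ := fun x =>
  ∫ t in x..(1:ℝ), σ₂ t * ∫ s in (0:ℝ)..t,
    Complex.exp (2 * Complex.I * μ * (t - s)) * σ₁ s * z s

/-- `γ₀₁(x,μ) = |∫₀ˣ e^{2iμ(x−t)} σ₁(t) dt|`. -/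
def gamma01 (σ₁ : ℝ → ℂ) (μ : ℂ) (x : ℝ) : ℝ :=
  ‖∫ t in (0:ℝ)..x, Complex.exp (2 * Complex.I * μ * (x - t)) * σ₁ t‖

/-- `γ₀₂(x,μ) = |∫ₓ¹ e^{2iμ(t−x)} σ₂(t) dt|`. -/
def gamma02 (σ₂ : ℝ → ℂ) (μ : ℂ) (x : ℝ) : ℝ :=
  ‖∫ t in x..(1:ℝ), Complex.exp (2 * Complex.I * μ * (t - x)) * σ₂ t‖

/-- `γ₁(μ) = ‖γ₀₁(·,μ)‖_{L^q[0,1]}`. -/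
def gamma1 (σ₁ : ℝ → ℂ) (q : ℝ≥0∞) (μ : ℂ) : ℝ :=
  (eLpNorm (fun x => gamma01 σ₁ μ x) q (volume.restrict (Icc (0:ℝ) 1))).toReal

/-- `γ₂(μ) = ‖γ₀₂(·,μ)‖_{L^q[0,1]}`. -/
def gamma2 (σ₂ : ℝ → ℂ) (q : ℝ≥0∞) (μ : ℂ) : ℝ :=
  (eLpNorm (fun x => gamma02 σ₂ μ x) q (volume.restrict (Icc (0:ℝ) 1))).toReal

/-- `γ̃(μ) = ∫₀¹ |σ₂| γ₀₁² + ∫₀¹ |σ₁| γ₀₂²`. -/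
def gammaT (σ₁ σ₂ : ℝ → ℂ) (μ : ℂ) : ℝ :=
  (∫ s in (0:ℝ)..1, ‖σ₂ s‖ * (gamma01 σ₁ μ s) ^ 2)
    + ∫ s in (0:ℝ)..1, ‖σ₁ s‖ * (gamma02 σ₂ μ s) ^ 2

/-- `‖σ‖_{L^p[0,1]}` where `σ(x) = max(|σ₁(x)|,|σ₂(x)|)`. -/
def sigmaNorm (σ₁ σ₂ : ℝ → ℂ) (p : ℝ≥0∞) : ℝ :=
  (eLpNorm (fun x => max ‖σ₁ x‖ ‖σ₂ x‖) p (volume.restrict (Icc (0:ℝ) 1))).toReal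

/-- The constant function `1` on `[0,1]`. -/
def eFun : ℝ → ℂ := fun _ => 1

/-- A solution of the Dirac system `y₁' + σ₁ y₂ = iμ y₁`, `y₂' + σ₂ y₁ = −iμ y₂` on `[0,1]`,
with `y₁, y₂` absolutely continuous (i.e. in `W^{1,1}[0,1]`, so each is the indefinite
integral of an integrable function, and the equations hold a.e. with those derivatives). -/
def IsDiracSolution (σ₁ σ₂ : ℝ → ℂ) (μ : ℂ) (y₁ y₂ : ℝ → ℂ) : Prop :=
  ∃ g₁ g₂ : ℝ → ℂ,
    IntervalIntegrable g₁ volume 0 1 ∧ IntervalIntegrable g₂ volume 0 1 ∧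
    (∀ x ∈ Icc (0:ℝ) 1, y₁ x = y₁ 0 + ∫ t in (0:ℝ)..x, g₁ t) ∧
    (∀ x ∈ Icc (0:ℝ) 1, y₂ x = y₂ 0 + ∫ t in (0:ℝ)..x, g₂ t) ∧
    (∀ᵐ x ∂(volume.restrict (Icc (0:ℝ) 1)),
      g₁ x + σ₁ x * y₂ x = Complex.I * μ * y₁ x) ∧
    (∀ᵐ x ∂(volume.restrict (Icc (0:ℝ) 1)),
      g₂ x + σ₂ x * y₁ x = -(Complex.I * μ) * y₂ x)

namespace Stmt0Aux

instance : IsProbabilityMeasure (volume.restrict (Icc (0:ℝ) 1)) :=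
  ⟨by rw [Measure.restrict_apply_univ]; simp [Real.volume_Icc]⟩

def sf (σ₁ σ₂ : ℝ → ℂ) : ℝ → ℝ := fun x => max ‖σ₁ x‖ ‖σ₂ x‖

variable {σ₁ σ₂ : ℝ → ℂ} {μ : ℂ} {r : ℝ} {p q : ℝ≥0∞}

lemma sf_nonneg (x : ℝ) : 0 ≤ sf σ₁ σ₂ x := le_max_of_le_left (norm_nonneg _)

lemma norm1_le_sf (x : ℝ) : ‖σ₁ x‖ ≤ sf σ₁ σ₂ x := le_max_left _ _
lemma norm2_le_sf (x : ℝ) : ‖σ₂ x‖ ≤ sf σ₁ σ₂ x := le_max_right _ _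

lemma g01_nonneg (x : ℝ) : 0 ≤ gamma01 σ₁ μ x := norm_nonneg _

lemma exp_bound (hr : 0 ≤ r) (hμ : -r < μ.im) {a b : ℝ} (h0 : a ≤ b) (h1 : b - a ≤ 1) :
    ‖Complex.exp (2 * Complex.I * μ * ((b : ℂ) - (a : ℂ)))‖ ≤ Real.exp (2 * r) := by
  rw [Complex.norm_exp, Real.exp_le_exp]
  have hre : (2 * Complex.I * μ * ((b : ℂ) - (a : ℂ))).re = -(2 * μ.im * (b - a)) := by
    simp [Complex.mul_re, Complex.mul_im]
  rw [hre]
  have h2 : -μ.im ≤ r := by linarith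
  nlinarith [mul_le_mul_of_nonneg_right h2 (sub_nonneg.mpr h0),
    mul_le_mul_of_nonneg_left h1 hr]

lemma integrableOn_of_sf_bound {X : Type*} [NormedAddCommGroup X]
    (hσInt : IntegrableOn (sf σ₁ σ₂) (Icc (0:ℝ) 1) volume)
    {f : ℝ → X} (hf : AEStronglyMeasurable f (volume.restrict (Icc (0:ℝ) 1)))
    {C : ℝ} (hC : ∀ x ∈ Icc (0:ℝ) 1, ‖f x‖ ≤ C * sf σ₁ σ₂ x) :
    IntegrableOn f (Icc (0:ℝ) 1) volume :=
  (hσInt.const_mul C).mono' hf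
    ((ae_restrict_mem measurableSet_Icc).mono fun x hx => hC x hx)


/-- the inner integral of `K1`. -/
def Ffun (σ₂ : ℝ → ℂ) (μ : ℂ) (w : ℝ → ℂ) : ℝ → ℂ := fun t =>
  ∫ s in t..(1:ℝ), Complex.exp (2 * Complex.I * μ * (s - t)) * σ₂ s * w s

lemma K1_eq (w : ℝ → ℂ) : K1 σ₁ σ₂ μ w = fun x => ∫ t in (0:ℝ)..x, σ₁ t * Ffun σ₂ μ w t := rfl

lemma Ffun_eq (w : ℝ → ℂ) (t : ℝ) :
    Ffun σ₂ μ w t = Complex.exp (2 * Complex.I * μ * (-(t:ℂ))) *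
      ∫ s in t..(1:ℝ), Complex.exp (2 * Complex.I * μ * (s:ℂ)) * σ₂ s * w s := by
  unfold Ffun
  rw [← intervalIntegral.integral_const_mul]
  apply intervalIntegral.integral_congr
  intro s _
  have h : (2 * Complex.I * μ * ((s:ℂ) - (t:ℂ))) =
      2 * Complex.I * μ * (-(t:ℂ)) + 2 * Complex.I * μ * (s:ℂ) := by ring
  simp only [h, Complex.exp_add]
  ring

lemma Ffun_contOn (hσ₂m : Measurable σ₂)
    (hσInt : IntegrableOn (sf σ₁ σ₂) (Icc (0:ℝ) 1) volume)
    {w : ℝ → ℂ} (hw : ContinuousOn w (Icc (0:ℝ) 1)) :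
    ContinuousOn (Ffun σ₂ μ w) (Icc (0:ℝ) 1) := by
  have hexpc : Continuous fun s : ℝ => Complex.exp (2 * Complex.I * μ * (s:ℂ)) :=
    Complex.continuous_exp.comp (continuous_const.mul Complex.continuous_ofReal)
  obtain ⟨C, hC⟩ := isCompact_Icc.exists_bound_of_continuousOn
    ((hexpc.continuousOn.mul hw) : ContinuousOn
      (fun s : ℝ => Complex.exp (2 * Complex.I * μ * (s:ℂ)) * w s) (Icc (0:ℝ) 1))
  have hint : IntegrableOn
      (fun s : ℝ => Complex.exp (2 * Complex.I * μ * (s:ℂ)) * σ₂ s * w s)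
      (Icc (0:ℝ) 1) volume := by
    apply integrableOn_of_sf_bound hσInt
    · exact ((hexpc.aestronglyMeasurable.mul hσ₂m.aestronglyMeasurable).mul
        (hw.aestronglyMeasurable measurableSet_Icc))
    · intro x hx
      have h1 : ‖Complex.exp (2 * Complex.I * μ * (x:ℂ)) * σ₂ x * w x‖
          = ‖Complex.exp (2 * Complex.I * μ * (x:ℂ)) * w x‖ * ‖σ₂ x‖ := by
        rw [norm_mul, norm_mul, norm_mul]; ring
      rw [h1]
      exact mul_le_mul ((hC x hx).trans (le_max_left C 0)) (norm2_le_sf x)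
        (norm_nonneg _) (le_max_right C 0)
  have hH : ContinuousOn
      (fun t : ℝ => ∫ s in t..(1:ℝ),
        Complex.exp (2 * Complex.I * μ * (s:ℂ)) * σ₂ s * w s) (Icc (0:ℝ) 1) := by
    have := intervalIntegral.continuousOn_primitive_interval_left
      (μ := volume) (a := (0:ℝ)) (b := (1:ℝ))
      (f := fun s : ℝ => Complex.exp (2 * Complex.I * μ * (s:ℂ)) * σ₂ s * w s)
      (by rwa [uIcc_of_le (zero_le_one)])
    rwa [uIcc_of_le (zero_le_one : (0:ℝ) ≤ 1)] at this
  have hexpc2 : Continuous fun t : ℝ => Complex.exp (2 * Complex.I * μ * (-(t:ℂ))) :=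
    Complex.continuous_exp.comp (continuous_const.mul Complex.continuous_ofReal.neg)
  exact ((hexpc2.continuousOn.mul hH)).congr fun t _ => Ffun_eq w t

lemma K1_integrandIntOn (hσ₁m : Measurable σ₁) (hσ₂m : Measurable σ₂)
    (hσInt : IntegrableOn (sf σ₁ σ₂) (Icc (0:ℝ) 1) volume)
    {w : ℝ → ℂ} (hw : ContinuousOn w (Icc (0:ℝ) 1)) :
    IntegrableOn (fun t => σ₁ t * Ffun σ₂ μ w t) (Icc (0:ℝ) 1) volume := by
  have hF : ContinuousOn (Ffun σ₂ μ w) (Icc (0:ℝ) 1) := Ffun_contOn hσ₂m hσInt hw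
  obtain ⟨C, hC⟩ := isCompact_Icc.exists_bound_of_continuousOn hF
  apply integrableOn_of_sf_bound hσInt
  · exact hσ₁m.aestronglyMeasurable.mul (hF.aestronglyMeasurable measurableSet_Icc)
  · intro x hx
    rw [norm_mul, mul_comm]
    exact mul_le_mul ((hC x hx).trans (le_max_left C 0)) (norm1_le_sf x)
      (norm_nonneg _) (le_max_right C 0)

lemma K1_contOn (hσ₁m : Measurable σ₁) (hσ₂m : Measurable σ₂)
    (hσInt : IntegrableOn (sf σ₁ σ₂) (Icc (0:ℝ) 1) volume)
    {w : ℝ → ℂ} (hw : ContinuousOn w (Icc (0:ℝ) 1)) :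
    ContinuousOn (K1 σ₁ σ₂ μ w) (Icc (0:ℝ) 1) := by
  rw [K1_eq]
  have := intervalIntegral.continuousOn_primitive_interval
    (μ := volume) (a := (0:ℝ)) (b := (1:ℝ)) (f := fun t => σ₁ t * Ffun σ₂ μ w t)
    (by rw [uIcc_of_le (zero_le_one : (0:ℝ) ≤ 1)]; exact K1_integrandIntOn hσ₁m hσ₂m hσInt hw)
  rwa [uIcc_of_le (zero_le_one : (0:ℝ) ≤ 1)] at this


lemma g01_eq (x : ℝ) :
    gamma01 σ₁ μ x = ‖Complex.exp (2 * Complex.I * μ * (x:ℂ)) *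
      ∫ t in (0:ℝ)..x, Complex.exp (2 * Complex.I * μ * (-(t:ℂ))) * σ₁ t‖ := by
  unfold gamma01
  rw [← intervalIntegral.integral_const_mul]
  congr 1
  apply intervalIntegral.integral_congr
  intro t _
  have h : (2 * Complex.I * μ * ((x:ℂ) - (t:ℂ))) =
      2 * Complex.I * μ * (x:ℂ) + 2 * Complex.I * μ * (-(t:ℂ)) := by ring
  simp only [h, Complex.exp_add]
  ring

lemma g01_contOn (hσ₁m : Measurable σ₁)
    (hσInt : IntegrableOn (sf σ₁ σ₂) (Icc (0:ℝ) 1) volume) :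
    ContinuousOn (gamma01 σ₁ μ) (Icc (0:ℝ) 1) := by
  have hexpc2 : Continuous fun t : ℝ => Complex.exp (2 * Complex.I * μ * (-(t:ℂ))) :=
    Complex.continuous_exp.comp (continuous_const.mul Complex.continuous_ofReal.neg)
  have hint : IntegrableOn
      (fun t : ℝ => Complex.exp (2 * Complex.I * μ * (-(t:ℂ))) * σ₁ t)
      (Icc (0:ℝ) 1) volume := by
    obtain ⟨C, hC⟩ := isCompact_Icc.exists_bound_of_continuousOn
      (hexpc2.continuousOn : ContinuousOn
        (fun t : ℝ => Complex.exp (2 * Complex.I * μ * (-(t:ℂ)))) (Icc (0:ℝ) 1))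
    apply integrableOn_of_sf_bound hσInt
    · exact hexpc2.aestronglyMeasurable.mul hσ₁m.aestronglyMeasurable
    · intro x hx
      rw [norm_mul]
      exact mul_le_mul ((hC x hx).trans (le_max_left C 0)) (norm1_le_sf x)
        (norm_nonneg _) (le_max_right C 0)
  have hH : ContinuousOn
      (fun x : ℝ => ∫ t in (0:ℝ)..x,
        Complex.exp (2 * Complex.I * μ * (-(t:ℂ))) * σ₁ t) (Icc (0:ℝ) 1) := by
    have := intervalIntegral.continuousOn_primitive_interval
      (μ := volume) (a := (0:ℝ)) (b := (1:ℝ))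
      (f := fun t : ℝ => Complex.exp (2 * Complex.I * μ * (-(t:ℂ))) * σ₁ t)
      (by rwa [uIcc_of_le (zero_le_one : (0:ℝ) ≤ 1)])
    rwa [uIcc_of_le (zero_le_one : (0:ℝ) ≤ 1)] at this
  have hexpc : Continuous fun x : ℝ => Complex.exp (2 * Complex.I * μ * (x:ℂ)) :=
    Complex.continuous_exp.comp (continuous_const.mul Complex.continuous_ofReal)
  exact ((hexpc.continuousOn.mul hH).norm).congr fun x _ => g01_eq x

lemma g01_bound (hr : 0 ≤ r) (hμ : -r < μ.im)
    (hσInt : IntegrableOn (sf σ₁ σ₂) (Icc (0:ℝ) 1) volume)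
    {m : ℝ} (hm : m ∈ Icc (0:ℝ) 1) :
    gamma01 σ₁ μ m ≤ Real.exp (2*r) * ∫ v in Ioc (0:ℝ) 1, sf σ₁ σ₂ v := by
  unfold gamma01
  rw [intervalIntegral.integral_of_le hm.1]
  have hint1 : IntegrableOn (fun t => Real.exp (2*r) * sf σ₁ σ₂ t) (Ioc (0:ℝ) 1) volume :=
    (hσInt.mono_set Ioc_subset_Icc_self).const_mul _
  calc ‖∫ t in Ioc (0:ℝ) m, Complex.exp (2 * Complex.I * μ * ((m:ℂ) - (t:ℂ))) * σ₁ t‖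
      ≤ ∫ t in Ioc (0:ℝ) m, Real.exp (2*r) * sf σ₁ σ₂ t := by
        apply norm_integral_le_of_norm_le (hint1.mono_set (Ioc_subset_Ioc_right hm.2))
        filter_upwards [ae_restrict_mem measurableSet_Ioc] with t ht
        rw [norm_mul]
        exact mul_le_mul (exp_bound hr hμ ht.2 (by linarith [ht.1, hm.2])) (norm1_le_sf t)
          (norm_nonneg _) (Real.exp_pos _).le
    _ ≤ ∫ t in Ioc (0:ℝ) 1, Real.exp (2*r) * sf σ₁ σ₂ t := by
        apply setIntegral_mono_set hint1
        · filter_upwards with t using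
            mul_nonneg (Real.exp_pos _).le (sf_nonneg t)
        · exact (Ioc_subset_Ioc_right hm.2).eventuallyLE
    _ = Real.exp (2*r) * ∫ v in Ioc (0:ℝ) 1, sf σ₁ σ₂ v := integral_const_mul _ _

lemma S0_nonneg : 0 ≤ ∫ v in Ioc (0:ℝ) 1, sf σ₁ σ₂ v :=
  setIntegral_nonneg measurableSet_Ioc fun x _ => sf_nonneg x

lemma g01_memLq (hσ₁m : Measurable σ₁) (hr : 0 ≤ r) (hμ : -r < μ.im)
    (hσInt : IntegrableOn (sf σ₁ σ₂) (Icc (0:ℝ) 1) volume) :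
    MemLp (gamma01 σ₁ μ) q (volume.restrict (Icc (0:ℝ) 1)) := by
  apply MemLp.of_bound
    ((g01_contOn hσ₁m hσInt).aestronglyMeasurable measurableSet_Icc)
    (Real.exp (2*r) * ∫ v in Ioc (0:ℝ) 1, sf σ₁ σ₂ v)
  filter_upwards [ae_restrict_mem measurableSet_Icc] with x hx
  rw [Real.norm_of_nonneg (g01_nonneg x)]
  exact g01_bound hr hμ hσInt hx

lemma holder_sf (hp1 : 1 ≤ p) (hpq : 1/p + 1/q = 1)
    (hσ : MemLp (sf σ₁ σ₂) p (volume.restrict (Icc (0:ℝ) 1)))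
    {g : ℝ → ℝ} (hg : MemLp g q (volume.restrict (Icc (0:ℝ) 1)))
    (hg0 : ∀ x, 0 ≤ g x) :
    ∫ v in Ioc (0:ℝ) 1, sf σ₁ σ₂ v * g v ≤
      (eLpNorm (sf σ₁ σ₂) p (volume.restrict (Icc (0:ℝ) 1))).toReal *
      (eLpNorm g q (volume.restrict (Icc (0:ℝ) 1))).toReal := by
  have hpqr : (1:ℝ≥0∞)/1 = 1/q + 1/p := by
    simpa [add_comm] using hpq.symm
  haveI : ENNReal.HolderTriple q p 1 := ⟨by simpa [one_div] using hpqr.symm⟩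
  have hmul : MemLp (g • sf σ₁ σ₂) 1 (volume.restrict (Icc (0:ℝ) 1)) :=
    hσ.smul hg
  have hint : Integrable (fun v => g v * sf σ₁ σ₂ v) (volume.restrict (Icc (0:ℝ) 1)) :=
    hmul.integrable le_rfl
  rw [← integral_Icc_eq_integral_Ioc]
  calc ∫ v in Icc (0:ℝ) 1, sf σ₁ σ₂ v * g v
      = ∫ v in Icc (0:ℝ) 1, ‖g v * sf σ₁ σ₂ v‖ := by
        apply integral_congr_ae
        filter_upwards with v
        rw [Real.norm_of_nonneg (mul_nonneg (hg0 v) (sf_nonneg v))]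
        ring
    _ = (eLpNorm (g • sf σ₁ σ₂) 1 (volume.restrict (Icc (0:ℝ) 1))).toReal := by
        rw [eLpNorm_one_eq_lintegral_enorm,
          ← integral_norm_eq_lintegral_enorm hmul.1]
        rfl
    _ ≤ ((eLpNorm g q (volume.restrict (Icc (0:ℝ) 1))) *
          (eLpNorm (sf σ₁ σ₂) p (volume.restrict (Icc (0:ℝ) 1)))).toReal := by
        apply ENNReal.toReal_mono (ENNReal.mul_ne_top hg.2.ne hσ.2.ne)
        exact eLpNorm_smul_le_mul_eLpNorm hσ.1 hg.1
    _ = _ := by rw [ENNReal.toReal_mul]; ring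

lemma S0_le (hp1 : 1 ≤ p)
    (hσ : MemLp (sf σ₁ σ₂) p (volume.restrict (Icc (0:ℝ) 1))) :
    ∫ v in Ioc (0:ℝ) 1, sf σ₁ σ₂ v ≤
      (eLpNorm (sf σ₁ σ₂) p (volume.restrict (Icc (0:ℝ) 1))).toReal := by
  rw [← integral_Icc_eq_integral_Ioc]
  calc ∫ v in Icc (0:ℝ) 1, sf σ₁ σ₂ v
      = ∫ v in Icc (0:ℝ) 1, ‖sf σ₁ σ₂ v‖ := by
        apply integral_congr_ae
        filter_upwards with v
        rw [Real.norm_of_nonneg (sf_nonneg v)]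
    _ = (eLpNorm (sf σ₁ σ₂) 1 (volume.restrict (Icc (0:ℝ) 1))).toReal := by
        rw [eLpNorm_one_eq_lintegral_enorm,
          ← integral_norm_eq_lintegral_enorm hσ.1]
    _ ≤ _ := ENNReal.toReal_mono hσ.2.ne
        (eLpNorm_le_eLpNorm_of_exponent_le hp1 hσ.1)


lemma K1_pointwise (hσ₁m : Measurable σ₁) (hσ₂m : Measurable σ₂)
    (hσInt : IntegrableOn (sf σ₁ σ₂) (Icc (0:ℝ) 1) volume)
    (hr : 0 ≤ r) (hμ : -r < μ.im)
    {z : ℝ → ℂ} (hz : Continuous z) {M : ℝ}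
    (hM : ∀ s ∈ Icc (0:ℝ) 1, ‖z s‖ ≤ M) (hM0 : 0 ≤ M)
    {s : ℝ} (hs : s ∈ Icc (0:ℝ) 1) :
    ‖K1 σ₁ σ₂ μ z s‖ ≤ Real.exp (2*r) * M *
      ((∫ v in Ioc (0:ℝ) s, sf σ₁ σ₂ v * gamma01 σ₁ μ v) +
       (∫ v in Ioc s (1:ℝ), sf σ₁ σ₂ v) * gamma01 σ₁ μ s) := by
  set E := Real.exp (2*r) with hE
  have hE0 : (0:ℝ) < E := Real.exp_pos _
  set ρ : ℝ × ℝ → ℂ := fun uv =>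
    if uv.1 ≤ uv.2 then
      σ₁ uv.1 * (Complex.exp (2 * Complex.I * μ * ((uv.2:ℂ) - (uv.1:ℂ))) * σ₂ uv.2 * z uv.2)
    else 0 with hρ
  set ν := (volume.restrict (Ioc (0:ℝ) s)).prod (volume.restrict (Ioc (0:ℝ) 1)) with hν
  have hρm : AEStronglyMeasurable ρ ν := by
    apply Measurable.aestronglyMeasurable
    apply Measurable.ite (measurableSet_le measurable_fst measurable_snd) _ measurable_const
    have harg : Measurable fun uv : ℝ × ℝ =>
        2 * Complex.I * μ * ((uv.2:ℂ) - (uv.1:ℂ)) := by fun_prop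
    exact (hσ₁m.comp measurable_fst).mul
      (((Complex.measurable_exp.comp harg).mul (hσ₂m.comp measurable_snd)).mul
        (hz.measurable.comp measurable_snd))
  have hsub1 : Ioc (0:ℝ) s ⊆ Icc (0:ℝ) 1 := fun u hu => ⟨hu.1.le, hu.2.trans hs.2⟩
  have hsub2 : Ioc (0:ℝ) 1 ⊆ Icc (0:ℝ) 1 := Ioc_subset_Icc_self
  have hae : ∀ᵐ uv ∂ν, uv ∈ (Ioc (0:ℝ) s) ×ˢ (Ioc (0:ℝ) 1) := by
    rw [hν, Measure.prod_restrict]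
    exact ae_restrict_mem (measurableSet_Ioc.prod measurableSet_Ioc)
  have hρint : Integrable ρ ν := by
    have hb : Integrable (fun uv : ℝ × ℝ => E * M * (sf σ₁ σ₂ uv.1 * sf σ₁ σ₂ uv.2)) ν :=
      ((hσInt.mono_set hsub1).mul_prod (hσInt.mono_set hsub2)).const_mul _
    apply hb.mono' hρm
    filter_upwards [hae] with uv huv
    obtain ⟨hu, hv⟩ := huv
    by_cases hcase : uv.1 ≤ uv.2
    · rw [hρ]
      simp only [if_pos hcase]
      rw [norm_mul, norm_mul, norm_mul]
      have hexp : ‖Complex.exp (2 * Complex.I * μ * ((uv.2:ℂ) - (uv.1:ℂ)))‖ ≤ E :=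
        exp_bound hr hμ hcase (by linarith [hu.1, hv.2])
      have hzb : ‖z uv.2‖ ≤ M := hM _ (hsub2 hv)
      have hA : ‖Complex.exp (2 * Complex.I * μ * ((uv.2:ℂ) - (uv.1:ℂ)))‖ * ‖σ₂ uv.2‖
          ≤ E * sf σ₁ σ₂ uv.2 := mul_le_mul hexp (norm2_le_sf _) (norm_nonneg _) hE0.le
      have hB : ‖Complex.exp (2 * Complex.I * μ * ((uv.2:ℂ) - (uv.1:ℂ)))‖ * ‖σ₂ uv.2‖ * ‖z uv.2‖
          ≤ E * sf σ₁ σ₂ uv.2 * M :=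
        mul_le_mul hA hzb (norm_nonneg _) (mul_nonneg hE0.le (sf_nonneg _))
      calc ‖σ₁ uv.1‖ * (‖Complex.exp (2 * Complex.I * μ * ((uv.2:ℂ) - (uv.1:ℂ)))‖ *
              ‖σ₂ uv.2‖ * ‖z uv.2‖)
          ≤ sf σ₁ σ₂ uv.1 * (E * sf σ₁ σ₂ uv.2 * M) :=
            mul_le_mul (norm1_le_sf _) hB (by positivity) (sf_nonneg _)
        _ = E * M * (sf σ₁ σ₂ uv.1 * sf σ₁ σ₂ uv.2) := by ring
    · rw [hρ]
      simp only [if_neg hcase, norm_zero]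
      exact mul_nonneg (mul_nonneg hE0.le hM0) (mul_nonneg (sf_nonneg _) (sf_nonneg _))
  have hswap : K1 σ₁ σ₂ μ z s =
      ∫ v in Ioc (0:ℝ) 1, ∫ u in Ioc (0:ℝ) s, ρ (u, v) := by
    have h1 : K1 σ₁ σ₂ μ z s = ∫ u in Ioc (0:ℝ) s, ∫ v in Ioc (0:ℝ) 1, ρ (u, v) := by
      show (∫ t in (0:ℝ)..s, σ₁ t * ∫ v in t..(1:ℝ),
        Complex.exp (2 * Complex.I * μ * ((v:ℂ) - (t:ℂ))) * σ₂ v * z v) = _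
      rw [intervalIntegral.integral_of_le hs.1]
      apply setIntegral_congr_fun measurableSet_Ioc
      intro u hu
      show σ₁ u * (∫ v in u..(1:ℝ),
        Complex.exp (2 * Complex.I * μ * ((v:ℂ) - (u:ℂ))) * σ₂ v * z v) =
        ∫ v in Ioc (0:ℝ) 1, ρ (u, v)
      have hρu : (fun v => ρ (u, v)) = (Ici u).indicator
          (fun v => σ₁ u * (Complex.exp (2 * Complex.I * μ * ((v:ℂ) - (u:ℂ))) * σ₂ v * z v)) := by
        funext v
        simp only [hρ, indicator_apply, mem_Ici]
      rw [hρu, setIntegral_indicator measurableSet_Ici]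
      have hset : Ioc (0:ℝ) 1 ∩ Ici u = Icc u 1 := by
        ext v
        simp only [mem_inter_iff, mem_Ioc, mem_Ici, mem_Icc]
        constructor
        · rintro ⟨⟨_, h2⟩, h3⟩; exact ⟨h3, h2⟩
        · rintro ⟨h1, h2⟩; exact ⟨⟨lt_of_lt_of_le hu.1 h1, h2⟩, h1⟩
      rw [hset, integral_Icc_eq_integral_Ioc,
        ← intervalIntegral.integral_of_le (hu.2.trans hs.2), intervalIntegral.integral_const_mul]
    rw [h1]
    exact integral_integral_swap hρint
  have hg01c : ContinuousOn (gamma01 σ₁ μ) (Icc (0:ℝ) 1) := g01_contOn hσ₁m hσInt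
  have hψint : IntegrableOn (fun v => sf σ₁ σ₂ v * gamma01 σ₁ μ (min s v))
      (Icc (0:ℝ) 1) volume := by
    have hmin : ContinuousOn (fun v : ℝ => gamma01 σ₁ μ (min s v)) (Icc (0:ℝ) 1) := by
      apply hg01c.comp ((continuous_const.min continuous_id).continuousOn)
      intro v hv
      exact ⟨le_min hs.1 hv.1, min_le_of_left_le hs.2⟩
    apply integrableOn_of_sf_bound
      (C := Real.exp (2*r) * ∫ v in Ioc (0:ℝ) 1, sf σ₁ σ₂ v) hσInt
    · exact ((hσ₁m.norm.max hσ₂m.norm).aestronglyMeasurable).mul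
        (hmin.aestronglyMeasurable measurableSet_Icc)
    · intro v hv
      rw [Real.norm_of_nonneg (mul_nonneg (sf_nonneg _) (g01_nonneg _)), mul_comm]
      apply mul_le_mul_of_nonneg_right _ (sf_nonneg v)
      exact g01_bound hr hμ hσInt ⟨le_min hs.1 hv.1, min_le_of_left_le hs.2⟩
  rw [hswap]
  have hbound : ‖∫ v in Ioc (0:ℝ) 1, ∫ u in Ioc (0:ℝ) s, ρ (u, v)‖ ≤
      ∫ v in Ioc (0:ℝ) 1, E * M * (sf σ₁ σ₂ v * gamma01 σ₁ μ (min s v)) := by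
    apply norm_integral_le_of_norm_le ((hψint.mono_set hsub2).const_mul _)
    filter_upwards [ae_restrict_mem measurableSet_Ioc] with v hv
    have hm0 : 0 ≤ min s v := le_min hs.1 hv.1.le
    have hmv : min s v ≤ v := min_le_right _ _
    have h2 : (fun u => ρ (u, v)) = (Iic v).indicator
        (fun u => σ₁ u * (Complex.exp (2 * Complex.I * μ * ((v:ℂ) - (u:ℂ))) * σ₂ v * z v)) := by
      funext u
      simp only [hρ, indicator_apply, mem_Iic]
    rw [h2, setIntegral_indicator measurableSet_Iic, Ioc_inter_Iic]
    have h3 : ∫ u in Ioc (0:ℝ) (min s v),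
        σ₁ u * (Complex.exp (2 * Complex.I * μ * ((v:ℂ) - (u:ℂ))) * σ₂ v * z v) =
        (σ₂ v * z v) * ∫ u in Ioc (0:ℝ) (min s v),
          Complex.exp (2 * Complex.I * μ * ((v:ℂ) - (u:ℂ))) * σ₁ u := by
      rw [← integral_const_mul]
      apply setIntegral_congr_fun measurableSet_Ioc
      intro u _
      dsimp only
      ring
    have h4 : ∫ u in Ioc (0:ℝ) (min s v),
        Complex.exp (2 * Complex.I * μ * ((v:ℂ) - (u:ℂ))) * σ₁ u =
        Complex.exp (2 * Complex.I * μ * ((v:ℂ) - ((min s v : ℝ):ℂ))) *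
          ∫ u in Ioc (0:ℝ) (min s v),
            Complex.exp (2 * Complex.I * μ * (((min s v : ℝ):ℂ) - (u:ℂ))) * σ₁ u := by
      rw [← integral_const_mul]
      apply setIntegral_congr_fun measurableSet_Ioc
      intro u _
      dsimp only
      rw [← mul_assoc, ← Complex.exp_add]
      congr 2
      ring
    have h5 : ‖∫ u in Ioc (0:ℝ) (min s v),
        Complex.exp (2 * Complex.I * μ * (((min s v : ℝ):ℂ) - (u:ℂ))) * σ₁ u‖ =
        gamma01 σ₁ μ (min s v) := by
      unfold gamma01
      rw [intervalIntegral.integral_of_le hm0]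
    rw [h3, h4, norm_mul, norm_mul, norm_mul, h5]
    have hexp : ‖Complex.exp (2 * Complex.I * μ * ((v:ℂ) - ((min s v : ℝ):ℂ)))‖ ≤ E :=
      exp_bound hr hμ hmv (by linarith [hv.2, hm0])
    have hzb : ‖z v‖ ≤ M := hM _ (hsub2 hv)
    calc ‖σ₂ v‖ * ‖z v‖ * (‖Complex.exp (2 * Complex.I * μ * ((v:ℂ) - ((min s v : ℝ):ℂ)))‖ *
            gamma01 σ₁ μ (min s v))
        ≤ sf σ₁ σ₂ v * M * (E * gamma01 σ₁ μ (min s v)) := by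
          apply mul_le_mul
          · exact mul_le_mul (norm2_le_sf _) hzb (norm_nonneg _) (sf_nonneg _)
          · exact mul_le_mul_of_nonneg_right hexp (g01_nonneg _)
          · exact mul_nonneg (norm_nonneg _) (g01_nonneg _)
          · exact mul_nonneg (sf_nonneg _) hM0
      _ = E * M * (sf σ₁ σ₂ v * gamma01 σ₁ μ (min s v)) := by ring
  refine hbound.trans (le_of_eq ?_)
  rw [integral_const_mul]
  congr 1
  have hunion : Ioc (0:ℝ) 1 = Ioc 0 s ∪ Ioc s 1 := (Ioc_union_Ioc_eq_Ioc hs.1 hs.2).symm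
  have hdisj : Disjoint (Ioc (0:ℝ) s) (Ioc s 1) := Ioc_disjoint_Ioc_of_le le_rfl
  rw [hunion, setIntegral_union hdisj measurableSet_Ioc
    (hψint.mono_set hsub1)
    (hψint.mono_set (fun v hv => ⟨(hs.1.trans hv.1.le : (0:ℝ) ≤ v), hv.2⟩))]
  congr 1
  · apply setIntegral_congr_fun measurableSet_Ioc
    intro v hv
    dsimp only
    rw [min_eq_right hv.2]
  · rw [← integral_mul_const]
    apply setIntegral_congr_fun measurableSet_Ioc
    intro v hv
    dsimp only
    rw [min_eq_left hv.1.le]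


lemma K1_sq_bound (hp1 : 1 ≤ p) (hpq : 1/p + 1/q = 1)
    (hσ₁m : Measurable σ₁) (hσ₂m : Measurable σ₂)
    (hσ : MemLp (sf σ₁ σ₂) p (volume.restrict (Icc (0:ℝ) 1)))
    (hr : 0 ≤ r) (hμ : -r < μ.im)
    {z : ℝ → ℂ} (hz : Continuous z) {M : ℝ}
    (hM : ∀ s ∈ Icc (0:ℝ) 1, ‖z s‖ ≤ M) (hM0 : 0 ≤ M)
    {x : ℝ} (hx : x ∈ Icc (0:ℝ) 1) :
    ‖K1 σ₁ σ₂ μ (K1 σ₁ σ₂ μ z) x‖ ≤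
      2 * Real.exp (4*r) *
        ((eLpNorm (sf σ₁ σ₂) p (volume.restrict (Icc (0:ℝ) 1))).toReal)^3 *
        (eLpNorm (gamma01 σ₁ μ) q (volume.restrict (Icc (0:ℝ) 1))).toReal * M := by
  set E := Real.exp (2*r) with hE
  have hE0 : (0:ℝ) < E := Real.exp_pos _
  have hσInt : IntegrableOn (sf σ₁ σ₂) (Icc (0:ℝ) 1) volume := hσ.integrable hp1
  set S0 := ∫ v in Ioc (0:ℝ) 1, sf σ₁ σ₂ v with hS0
  set A := ∫ v in Ioc (0:ℝ) 1, sf σ₁ σ₂ v * gamma01 σ₁ μ v with hA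
  set N := (eLpNorm (sf σ₁ σ₂) p (volume.restrict (Icc (0:ℝ) 1))).toReal with hN
  set G := (eLpNorm (gamma01 σ₁ μ) q (volume.restrict (Icc (0:ℝ) 1))).toReal with hG
  have hS00 : 0 ≤ S0 := S0_nonneg
  have hA0 : 0 ≤ A := setIntegral_nonneg measurableSet_Ioc
    fun v _ => mul_nonneg (sf_nonneg v) (g01_nonneg v)
  have hN0 : 0 ≤ N := ENNReal.toReal_nonneg
  have hG0 : 0 ≤ G := ENNReal.toReal_nonneg
  have hS0N : S0 ≤ N := S0_le hp1 hσ
  have hANG : A ≤ N * G := holder_sf hp1 hpq hσ (g01_memLq hσ₁m hr hμ hσInt) g01_nonneg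
  have hsfγInt : IntegrableOn (fun v => sf σ₁ σ₂ v * gamma01 σ₁ μ v) (Icc (0:ℝ) 1) volume := by
    apply integrableOn_of_sf_bound (C := E * S0) hσInt
    · exact ((hσ₁m.norm.max hσ₂m.norm).aestronglyMeasurable).mul
        ((g01_contOn hσ₁m hσInt).aestronglyMeasurable measurableSet_Icc)
    · intro v hv
      rw [Real.norm_of_nonneg (mul_nonneg (sf_nonneg _) (g01_nonneg _)), mul_comm]
      exact mul_le_mul_of_nonneg_right (g01_bound hr hμ hσInt hv) (sf_nonneg v)
  set w := K1 σ₁ σ₂ μ z with hwdef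
  have hwc : ContinuousOn w (Icc (0:ℝ) 1) := K1_contOn hσ₁m hσ₂m hσInt hz.continuousOn
  have hwb : ∀ s ∈ Icc (0:ℝ) 1, ‖w s‖ ≤ E * M * (A + S0 * gamma01 σ₁ μ s) := by
    intro s hs
    refine (K1_pointwise hσ₁m hσ₂m hσInt hr hμ hz hM hM0 hs).trans ?_
    have h1 : (∫ v in Ioc (0:ℝ) s, sf σ₁ σ₂ v * gamma01 σ₁ μ v) ≤ A := by
      apply setIntegral_mono_set (hsfγInt.mono_set Ioc_subset_Icc_self)
      · filter_upwards with v using mul_nonneg (sf_nonneg v) (g01_nonneg v)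
      · exact (Ioc_subset_Ioc_right hs.2).eventuallyLE
    have h2 : (∫ v in Ioc s (1:ℝ), sf σ₁ σ₂ v) ≤ S0 := by
      apply setIntegral_mono_set (hσInt.mono_set Ioc_subset_Icc_self)
      · filter_upwards with v using sf_nonneg v
      · exact (Ioc_subset_Ioc_left hs.1).eventuallyLE
    have h3 : (∫ v in Ioc s (1:ℝ), sf σ₁ σ₂ v) * gamma01 σ₁ μ s ≤ S0 * gamma01 σ₁ μ s :=
      mul_le_mul_of_nonneg_right h2 (g01_nonneg s)
    have h4 : (∫ v in Ioc (0:ℝ) s, sf σ₁ σ₂ v * gamma01 σ₁ μ v) +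
        (∫ v in Ioc s (1:ℝ), sf σ₁ σ₂ v) * gamma01 σ₁ μ s ≤ A + S0 * gamma01 σ₁ μ s := by
      linarith
    exact mul_le_mul_of_nonneg_left h4 (mul_nonneg hE0.le hM0)
  obtain ⟨Cw, hCw⟩ := isCompact_Icc.exists_bound_of_continuousOn hwc
  have hsfwInt : IntegrableOn (fun s => sf σ₁ σ₂ s * ‖w s‖) (Icc (0:ℝ) 1) volume := by
    apply integrableOn_of_sf_bound (C := max Cw 0) hσInt
    · exact ((hσ₁m.norm.max hσ₂m.norm).aestronglyMeasurable).mul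
        ((hwc.norm).aestronglyMeasurable measurableSet_Icc)
    · intro v hv
      rw [Real.norm_of_nonneg (mul_nonneg (sf_nonneg _) (norm_nonneg _)), mul_comm]
      exact mul_le_mul_of_nonneg_right ((hCw v hv).trans (le_max_left _ _)) (sf_nonneg v)
  set D := ∫ s in Ioc (0:ℝ) 1, sf σ₁ σ₂ s * ‖w s‖ with hD
  have hD0 : 0 ≤ D := setIntegral_nonneg measurableSet_Ioc
    fun v _ => mul_nonneg (sf_nonneg v) (norm_nonneg _)
  have hbInt : IntegrableOn (fun s => E * (sf σ₁ σ₂ s * ‖w s‖)) (Ioc (0:ℝ) 1) volume :=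
    (hsfwInt.mono_set Ioc_subset_Icc_self).const_mul E
  have hFb : ∀ t ∈ Icc (0:ℝ) 1, ‖Ffun σ₂ μ w t‖ ≤ E * D := by
    intro t ht
    calc ‖Ffun σ₂ μ w t‖
        = ‖∫ s in Ioc t 1, Complex.exp (2 * Complex.I * μ * ((s:ℂ) - (t:ℂ))) * σ₂ s * w s‖ := by
          unfold Ffun
          rw [intervalIntegral.integral_of_le ht.2]
      _ ≤ ∫ s in Ioc t 1, E * (sf σ₁ σ₂ s * ‖w s‖) := by
          apply norm_integral_le_of_norm_le (hbInt.mono_set (Ioc_subset_Ioc_left ht.1))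
          filter_upwards [ae_restrict_mem measurableSet_Ioc] with s hsm
          rw [norm_mul, norm_mul]
          have hexp : ‖Complex.exp (2 * Complex.I * μ * ((s:ℂ) - (t:ℂ)))‖ ≤ E :=
            exp_bound hr hμ hsm.1.le (by linarith [ht.1, hsm.2])
          calc ‖Complex.exp (2 * Complex.I * μ * ((s:ℂ) - (t:ℂ)))‖ * ‖σ₂ s‖ * ‖w s‖
              ≤ E * sf σ₁ σ₂ s * ‖w s‖ :=
                mul_le_mul_of_nonneg_right
                  (mul_le_mul hexp (norm2_le_sf s) (norm_nonneg _) hE0.le) (norm_nonneg _)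
            _ = E * (sf σ₁ σ₂ s * ‖w s‖) := by ring
      _ ≤ ∫ s in Ioc (0:ℝ) 1, E * (sf σ₁ σ₂ s * ‖w s‖) := by
          apply setIntegral_mono_set hbInt
          · filter_upwards with s using
              mul_nonneg hE0.le (mul_nonneg (sf_nonneg s) (norm_nonneg _))
          · exact (Ioc_subset_Ioc_left ht.1).eventuallyLE
      _ = E * D := integral_const_mul _ _
  have houter : ‖K1 σ₁ σ₂ μ w x‖ ≤ S0 * (E * D) := by
    calc ‖K1 σ₁ σ₂ μ w x‖
        = ‖∫ t in Ioc (0:ℝ) x, σ₁ t * Ffun σ₂ μ w t‖ := by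
          rw [K1_eq]
          dsimp only
          rw [intervalIntegral.integral_of_le hx.1]
      _ ≤ ∫ t in Ioc (0:ℝ) x, sf σ₁ σ₂ t * (E * D) := by
          apply norm_integral_le_of_norm_le
            (((hσInt.mono_set (fun u hu => ⟨hu.1.le, hu.2.trans hx.2⟩))).mul_const _)
          filter_upwards [ae_restrict_mem measurableSet_Ioc] with t htm
          rw [norm_mul]
          exact mul_le_mul (norm1_le_sf t) (hFb t ⟨htm.1.le, htm.2.trans hx.2⟩)
            (norm_nonneg _) (sf_nonneg t)
      _ ≤ ∫ t in Ioc (0:ℝ) 1, sf σ₁ σ₂ t * (E * D) := by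
          apply setIntegral_mono_set ((hσInt.mono_set Ioc_subset_Icc_self).mul_const _)
          · filter_upwards with t using
              mul_nonneg (sf_nonneg t) (mul_nonneg hE0.le hD0)
          · exact (Ioc_subset_Ioc_right hx.2).eventuallyLE
      _ = S0 * (E * D) := integral_mul_const _ _
  have hDb : D ≤ E * M * (2 * S0 * A) := by
    have hstep : ∀ s ∈ Ioc (0:ℝ) 1, sf σ₁ σ₂ s * ‖w s‖ ≤
        (E*M*A) * sf σ₁ σ₂ s + (E*M*S0) * (sf σ₁ σ₂ s * gamma01 σ₁ μ s) := by
      intro s hsm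
      calc sf σ₁ σ₂ s * ‖w s‖
          ≤ sf σ₁ σ₂ s * (E * M * (A + S0 * gamma01 σ₁ μ s)) :=
            mul_le_mul_of_nonneg_left (hwb s (Ioc_subset_Icc_self hsm)) (sf_nonneg s)
        _ = (E*M*A) * sf σ₁ σ₂ s + (E*M*S0) * (sf σ₁ σ₂ s * gamma01 σ₁ μ s) := by ring
    calc D ≤ ∫ s in Ioc (0:ℝ) 1,
          ((E*M*A) * sf σ₁ σ₂ s + (E*M*S0) * (sf σ₁ σ₂ s * gamma01 σ₁ μ s)) :=
          setIntegral_mono_on (hsfwInt.mono_set Ioc_subset_Icc_self)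
            (((hσInt.mono_set Ioc_subset_Icc_self).const_mul _).add
              ((hsfγInt.mono_set Ioc_subset_Icc_self).const_mul _))
            measurableSet_Ioc hstep
      _ = (E*M*A) * S0 + (E*M*S0) * A := by
          rw [integral_add ((hσInt.mono_set Ioc_subset_Icc_self).const_mul _)
            ((hsfγInt.mono_set Ioc_subset_Icc_self).const_mul _),
            integral_const_mul, integral_const_mul]
      _ = E * M * (2 * S0 * A) := by ring
  have hEE : E * E = Real.exp (4*r) := by
    rw [hE, ← Real.exp_add]
    congr 1
    ring
  calc ‖K1 σ₁ σ₂ μ w x‖ ≤ S0 * (E * D) := houter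
    _ ≤ S0 * (E * (E * M * (2 * S0 * A))) := by
        apply mul_le_mul_of_nonneg_left (mul_le_mul_of_nonneg_left hDb hE0.le) hS00
    _ = 2*(E*E)*M*(S0*(S0*A)) := by ring
    _ ≤ 2*(E*E)*M*(N*(N*(N*G))) := by
        have h1 : S0*A ≤ N*(N*G) := mul_le_mul hS0N hANG hA0 hN0
        have h2 : S0*(S0*A) ≤ N*(N*(N*G)) := mul_le_mul hS0N h1 (mul_nonneg hS00 hA0) hN0
        exact mul_le_mul_of_nonneg_left h2
          (mul_nonneg (by positivity) hM0)
    _ = 2 * Real.exp (4*r) * N^3 * G * M := by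
        rw [← hEE]; ring

lemma K1_congrOn {w w' : ℝ → ℂ} (h : ∀ s ∈ Icc (0:ℝ) 1, w s = w' s)
    {x : ℝ} (hx : x ∈ Icc (0:ℝ) 1) : K1 σ₁ σ₂ μ w x = K1 σ₁ σ₂ μ w' x := by
  apply intervalIntegral.integral_congr
  intro t ht
  rw [uIcc_of_le hx.1] at ht
  dsimp only
  congr 1
  apply intervalIntegral.integral_congr
  intro u hu
  rw [uIcc_of_le (ht.2.trans hx.2)] at hu
  dsimp only
  rw [h u ⟨ht.1.trans hu.1, hu.2⟩]

lemma K1_iter_congrOn (n : ℕ) {w w' : ℝ → ℂ} (h : ∀ s ∈ Icc (0:ℝ) 1, w s = w' s) :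
    ∀ x ∈ Icc (0:ℝ) 1, (K1 σ₁ σ₂ μ)^[n] w x = (K1 σ₁ σ₂ μ)^[n] w' x := by
  induction n generalizing w w' with
  | zero => intro x hx; simpa using h x hx
  | succ k ih =>
    intro x hx
    rw [Function.iterate_succ_apply', Function.iterate_succ_apply']
    exact K1_congrOn (fun s hs => ih h s hs) hx

def cl (t : ℝ) : ℝ := max 0 (min t 1)

lemma cl_mem (t : ℝ) : cl t ∈ Icc (0:ℝ) 1 :=
  ⟨le_max_left _ _, max_le zero_le_one (min_le_right _ _)⟩

lemma cl_eq {t : ℝ} (ht : t ∈ Icc (0:ℝ) 1) : cl t = t := by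
  unfold cl
  rw [min_eq_left ht.2, max_eq_right ht.1]

lemma cl_cont : Continuous cl :=
  continuous_const.max (continuous_id.min continuous_const)

lemma iter_bound (hp1 : 1 ≤ p) (hpq : 1/p + 1/q = 1)
    (hσ₁m : Measurable σ₁) (hσ₂m : Measurable σ₂)
    (hσ : MemLp (sf σ₁ σ₂) p (volume.restrict (Icc (0:ℝ) 1)))
    (hr : 0 ≤ r) (hμ : -r < μ.im) :
    ∀ (n : ℕ) (z : ℝ → ℂ), Continuous z → ∀ (M : ℝ), 0 ≤ M →
      (∀ s ∈ Icc (0:ℝ) 1, ‖z s‖ ≤ M) →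
    ∀ x ∈ Icc (0:ℝ) 1, ‖(K1 σ₁ σ₂ μ)^[2*n] z x‖ ≤
      (2 * Real.exp (4*r) *
        ((eLpNorm (sf σ₁ σ₂) p (volume.restrict (Icc (0:ℝ) 1))).toReal)^3 *
        (eLpNorm (gamma01 σ₁ μ) q (volume.restrict (Icc (0:ℝ) 1))).toReal)^n * M := by
  intro n
  induction n with
  | zero =>
    intro z hz M hM0 hM x hx
    simpa using hM x hx
  | succ k ih =>
    intro z hz M hM0 hM x hx
    have hσInt : IntegrableOn (sf σ₁ σ₂) (Icc (0:ℝ) 1) volume := hσ.integrable hp1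
    set C := 2 * Real.exp (4*r) *
        ((eLpNorm (sf σ₁ σ₂) p (volume.restrict (Icc (0:ℝ) 1))).toReal)^3 *
        (eLpNorm (gamma01 σ₁ μ) q (volume.restrict (Icc (0:ℝ) 1))).toReal with hC
    have hC0 : 0 ≤ C := by
      apply mul_nonneg (mul_nonneg (by positivity) _) ENNReal.toReal_nonneg
      exact pow_nonneg ENNReal.toReal_nonneg 3
    set w := K1 σ₁ σ₂ μ (K1 σ₁ σ₂ μ z) with hwdef
    have hwc : ContinuousOn w (Icc (0:ℝ) 1) :=
      K1_contOn hσ₁m hσ₂m hσInt (K1_contOn hσ₁m hσ₂m hσInt hz.continuousOn)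
    set w' := fun t => w (cl t) with hw'
    have hw'c : Continuous w' := hwc.comp_continuous cl_cont cl_mem
    have hagree : ∀ s ∈ Icc (0:ℝ) 1, w' s = w s := by
      intro s hs
      rw [hw']
      dsimp only
      rw [cl_eq hs]
    have hwb : ∀ s ∈ Icc (0:ℝ) 1, ‖w' s‖ ≤ C * M := by
      intro s hs
      rw [hagree s hs]
      exact K1_sq_bound hp1 hpq hσ₁m hσ₂m hσ hr hμ hz hM hM0 hs
    have hiter : (K1 σ₁ σ₂ μ)^[2*(k+1)] z x = (K1 σ₁ σ₂ μ)^[2*k] w' x := by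
      have h1 : (K1 σ₁ σ₂ μ)^[2*(k+1)] z x = (K1 σ₁ σ₂ μ)^[2*k] w x := by
        rw [show 2*(k+1) = 2*k + 2 by ring, Function.iterate_add_apply]
        congr 1
      rw [h1]
      exact (K1_iter_congrOn (2*k) hagree x hx).symm
    rw [hiter]
    calc ‖(K1 σ₁ σ₂ μ)^[2*k] w' x‖ ≤ C^k * (C * M) :=
        ih w' hw'c (C * M) (mul_nonneg hC0 hM0) hwb x hx
      _ = C^(k+1) * M := by ring

end Stmt0Aux

/-- bound for powers of `K₁` in the half-plane `Im μ > −r`. -/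
theorem stmt0
    (p q : ℝ≥0∞) (hp1 : 1 ≤ p) (hp2 : p < 2) (hpq : 1/p + 1/q = 1)
    (σ₁ σ₂ : ℝ → ℂ) (hσ₁m : Measurable σ₁) (hσ₂m : Measurable σ₂)
    (hσ₁ : MemLp σ₁ p (volume.restrict (Icc (0:ℝ) 1)))
    (hσ₂ : MemLp σ₂ p (volume.restrict (Icc (0:ℝ) 1)))
    (r : ℝ) (hr : 0 ≤ r) :
    ∀ μ : ℂ, -r < μ.im →
      ∀ z : ℝ → ℂ, ContinuousOn z (Icc (0:ℝ) 1) →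
        ∀ n : ℕ, ∀ x ∈ Icc (0:ℝ) 1,
          ‖((K1 σ₁ σ₂ μ)^[2*n] z) x‖ ≤
            (2 * Real.exp (4*r) * (sigmaNorm σ₁ σ₂ p)^3)^n * (gamma1 σ₁ q μ)^n *
              (⨆ t : Icc (0:ℝ) 1, ‖z t‖) := by
  intro μ hμ z hz n x hx
  have hσ : MemLp (Stmt0Aux.sf σ₁ σ₂) p (volume.restrict (Icc (0:ℝ) 1)) := by
    apply MemLp.of_le (hσ₁.norm.add hσ₂.norm)
      ((hσ₁m.norm.max hσ₂m.norm).aestronglyMeasurable)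
    filter_upwards with v
    simp only [Pi.add_apply]
    have h2 : (0:ℝ) ≤ ‖σ₁ v‖ + ‖σ₂ v‖ := by positivity
    calc ‖Stmt0Aux.sf σ₁ σ₂ v‖
        = Stmt0Aux.sf σ₁ σ₂ v := Real.norm_of_nonneg (Stmt0Aux.sf_nonneg v)
      _ ≤ ‖σ₁ v‖ + ‖σ₂ v‖ := max_le (le_add_of_nonneg_right (norm_nonneg _))
          (le_add_of_nonneg_left (norm_nonneg _))
      _ = ‖‖σ₁ v‖ + ‖σ₂ v‖‖ := (Real.norm_of_nonneg h2).symm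
  obtain ⟨Cz, hCz⟩ := isCompact_Icc.exists_bound_of_continuousOn hz
  have hbdd : BddAbove (range fun t : Icc (0:ℝ) 1 => ‖z t‖) :=
    ⟨Cz, by rintro _ ⟨t, rfl⟩; exact hCz t t.2⟩
  set M := ⨆ t : Icc (0:ℝ) 1, ‖z t‖ with hMdef
  have hMb : ∀ s ∈ Icc (0:ℝ) 1, ‖z s‖ ≤ M := fun s hs => le_ciSup hbdd ⟨s, hs⟩
  have hM0 : 0 ≤ M := le_trans (norm_nonneg (z 0)) (hMb 0 (by norm_num))
  set z' := fun t => z (Stmt0Aux.cl t) with hz'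
  have hz'c : Continuous z' := hz.comp_continuous Stmt0Aux.cl_cont Stmt0Aux.cl_mem
  have hagree : ∀ s ∈ Icc (0:ℝ) 1, z' s = z s := by
    intro s hs
    rw [hz']
    dsimp only
    rw [Stmt0Aux.cl_eq hs]
  have hz'b : ∀ s ∈ Icc (0:ℝ) 1, ‖z' s‖ ≤ M := by
    intro s hs
    rw [hagree s hs]
    exact hMb s hs
  have heq : (K1 σ₁ σ₂ μ)^[2*n] z' x = (K1 σ₁ σ₂ μ)^[2*n] z x :=
    Stmt0Aux.K1_iter_congrOn (2*n) hagree x hx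
  rw [← heq]
  have hb := Stmt0Aux.iter_bound hp1 hpq hσ₁m hσ₂m hσ hr hμ n z' hz'c M hM0 hz'b x hx
  refine hb.trans (le_of_eq ?_)
  rw [mul_pow]
  rfl
end
end

section
/- For every μ ∈ ℂ and every x ∈ [0,1], the following exact identity holds: ∫ₓ¹ e^{2iμt} σ₂(t) (K₁e)(t) dt = ∫ₓ¹ e^{2iμs} σ₁(s) (∫ₛ¹ e^{2iμ(t−s)} σ₂(t) dt)² ds + e^{2iμx} (K₁e)(x) · ∫ₓ¹ e^{2iμ(t−x)} σ₂(t) dt. -/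
open MeasureTheory Set
open scoped ENNReal

noncomputable section

/-- Fubini on the triangle `x ≤ u ≤ t ≤ 1`. -/
lemma tri_fubini {x : ℝ} (hx : x ≤ 1) {f g : ℝ → ℂ}
    (hf : IntegrableOn f (Ioc x 1)) (hg : IntegrableOn g (Ioc x 1)) :
    (∫ t in x..1, f t * ∫ u in x..t, g u) = ∫ u in x..1, g u * ∫ t in u..1, f t := by
  set ν := volume.restrict (Ioc x 1) with hν
  have hS : MeasurableSet {p : ℝ × ℝ | p.2 ≤ p.1} :=
    measurableSet_le measurable_snd measurable_fst
  set Φ : ℝ → ℝ → ℂ := fun t u =>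
    ({p : ℝ × ℝ | p.2 ≤ p.1}).indicator (fun p => f p.1 * g p.2) (t, u) with hΦdef
  have huncurry : Function.uncurry Φ
      = ({p : ℝ × ℝ | p.2 ≤ p.1}).indicator (fun p => f p.1 * g p.2) := by
    funext p; simp [Function.uncurry, hΦdef]
  have hint : Integrable (Function.uncurry Φ) (ν.prod ν) := by
    rw [huncurry]
    exact (Integrable.mul_prod hf hg).indicator hS
  have swap := MeasureTheory.integral_integral_swap hint
  have hL : (∫ t, ∫ u, Φ t u ∂ν ∂ν) = ∫ t in x..1, f t * ∫ u in x..t, g u := by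
    rw [intervalIntegral.integral_of_le hx]
    apply setIntegral_congr_fun measurableSet_Ioc
    intro t ht
    have h1 : ∀ u, Φ t u = (Iic t).indicator (fun u => f t * g u) u := by
      intro u
      simp [hΦdef, Set.indicator_apply, Set.mem_Iic, Set.mem_setOf_eq]
    simp_rw [h1]
    rw [integral_indicator measurableSet_Iic, Measure.restrict_restrict measurableSet_Iic,
      Iic_inter_Ioc_of_le ht.2, integral_const_mul,
      intervalIntegral.integral_of_le (le_of_lt ht.1)]
  have hR : (∫ u, ∫ t, Φ t u ∂ν ∂ν) = ∫ u in x..1, g u * ∫ t in u..1, f t := by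
    rw [intervalIntegral.integral_of_le hx]
    apply setIntegral_congr_fun measurableSet_Ioc
    intro u hu
    have h1 : ∀ t, Φ t u = (Ici u).indicator (fun t => g u * f t) t := by
      intro t
      simp [hΦdef, Set.indicator_apply, Set.mem_Ici, Set.mem_setOf_eq, mul_comm]
    simp_rw [h1]
    have h2 : Ici u ∩ Ioc x 1 = Icc u 1 := by
      ext t
      simp only [Set.mem_inter_iff, Set.mem_Ici, Set.mem_Ioc, Set.mem_Icc]
      constructor
      · rintro ⟨a, _, c⟩; exact ⟨a, c⟩
      · rintro ⟨a, b⟩; exact ⟨a, lt_of_lt_of_le hu.1 a, b⟩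
    rw [integral_indicator measurableSet_Ici, Measure.restrict_restrict measurableSet_Ici,
      h2, integral_Icc_eq_integral_Ioc, integral_const_mul,
      intervalIntegral.integral_of_le hu.2]
  rw [← hL, ← hR, swap]

/-- exact identity for `∫ₓ¹ e^{2iμt} σ₂(t) (K₁e)(t) dt`. -/
theorem stmt1
    (p : ℝ≥0∞) (hp1 : 1 ≤ p) (hp2 : p < 2)
    (σ₁ σ₂ : ℝ → ℂ) (hσ₁m : Measurable σ₁) (hσ₂m : Measurable σ₂)
    (hσ₁ : MemLp σ₁ p (volume.restrict (Icc (0:ℝ) 1)))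
    (hσ₂ : MemLp σ₂ p (volume.restrict (Icc (0:ℝ) 1))) :
    ∀ μ : ℂ, ∀ x ∈ Icc (0:ℝ) 1,
      (∫ t in x..(1:ℝ), Complex.exp (2*Complex.I*μ*t) * σ₂ t * K1 σ₁ σ₂ μ eFun t)
        = (∫ s in x..(1:ℝ), Complex.exp (2*Complex.I*μ*s) * σ₁ s *
            (∫ t in s..(1:ℝ), Complex.exp (2*Complex.I*μ*(t - s)) * σ₂ t)^2)
          + Complex.exp (2*Complex.I*μ*x) * K1 σ₁ σ₂ μ eFun x *
            ∫ t in x..(1:ℝ), Complex.exp (2*Complex.I*μ*(t - x)) * σ₂ t := by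

  intro μ x hx
  obtain ⟨hx0, hx1⟩ := hx
  set F : ℝ → ℂ := K1 σ₁ σ₂ μ eFun with hF
  set G : ℝ → ℂ := fun t => ∫ s in t..(1:ℝ),
    Complex.exp (2 * Complex.I * μ * (s - t)) * σ₂ s with hG
  set h : ℝ → ℂ := fun t => Complex.exp (2 * Complex.I * μ * t) * σ₂ t with hh
  have hσ₁i : IntervalIntegrable σ₁ volume 0 1 := by
    rw [intervalIntegrable_iff_integrableOn_Icc_of_le zero_le_one]
    exact hσ₁.integrable hp1
  have hσ₂i : IntervalIntegrable σ₂ volume 0 1 := by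
    rw [intervalIntegrable_iff_integrableOn_Icc_of_le zero_le_one]
    exact hσ₂.integrable hp1
  have hexp : Continuous fun t : ℝ => Complex.exp (2 * Complex.I * μ * t) :=
    Complex.continuous_exp.comp (continuous_const.mul Complex.continuous_ofReal)
  have hhi01 : IntervalIntegrable h volume 0 1 := by
    rw [hh]
    exact hσ₂i.continuousOn_mul hexp.continuousOn
  have hmemx1 : uIcc x (1:ℝ) ⊆ uIcc (0:ℝ) 1 := by
    apply uIcc_subset_uIcc
    · rw [uIcc_of_le zero_le_one]; exact ⟨hx0, hx1⟩
    · rw [uIcc_of_le zero_le_one]; exact ⟨zero_le_one, le_refl 1⟩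
  have hhx1 : IntervalIntegrable h volume x 1 := hhi01.mono_set hmemx1
  have hGe : ∀ t : ℝ, (∫ s in t..(1:ℝ), h s) = Complex.exp (2 * Complex.I * μ * t) * G t := by
    intro t
    rw [hG]
    rw [← intervalIntegral.integral_const_mul]
    apply intervalIntegral.integral_congr
    intro s _
    show h s = Complex.exp (2 * Complex.I * μ * t) *
      (Complex.exp (2 * Complex.I * μ * (s - t)) * σ₂ s)
    rw [hh]
    show Complex.exp (2 * Complex.I * μ * s) * σ₂ s = _
    rw [← mul_assoc, ← Complex.exp_add]
    congr 2
    push_cast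
    ring
  have hprim : ContinuousOn (fun t => ∫ s in t..(1:ℝ), h s) (Icc (0:ℝ) 1) := by
    have hint : IntegrableOn h (uIcc (0:ℝ) 1) volume := by
      rw [uIcc_of_le zero_le_one]
      exact (intervalIntegrable_iff_integrableOn_Icc_of_le zero_le_one).mp hhi01
    have := intervalIntegral.continuousOn_primitive_interval_left (a := 0) (b := 1) hint
    rwa [uIcc_of_le zero_le_one] at this
  have hexpneg : Continuous fun t : ℝ => Complex.exp (-(2 * Complex.I * μ * t)) :=
    Complex.continuous_exp.comp (continuous_const.mul Complex.continuous_ofReal).neg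
  have hGc : ContinuousOn G (Icc (0:ℝ) 1) := by
    have heq : ∀ t ∈ Icc (0:ℝ) 1,
        G t = Complex.exp (-(2 * Complex.I * μ * t)) * ∫ s in t..(1:ℝ), h s := by
      intro t _
      rw [hGe t, ← mul_assoc, ← Complex.exp_add, neg_add_cancel, Complex.exp_zero, one_mul]
    exact ContinuousOn.congr (hexpneg.continuousOn.mul hprim) (fun t ht => heq t ht)
  have hσG : IntervalIntegrable (fun u => σ₁ u * G u) volume 0 1 := by
    apply hσ₁i.mul_continuousOn
    rwa [uIcc_of_le zero_le_one]
  have hσGx1 : IntervalIntegrable (fun u => σ₁ u * G u) volume x 1 := hσG.mono_set hmemx1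
  have hFeq : ∀ t : ℝ, F t = ∫ u in (0:ℝ)..t, σ₁ u * G u := by
    intro t
    rw [hF, hG]
    simp [K1, eFun]
  have hFdec : ∀ t ∈ uIcc x (1:ℝ), F t = F x + ∫ u in x..t, σ₁ u * G u := by
    intro t ht
    rw [uIcc_of_le hx1] at ht
    have h1 : IntervalIntegrable (fun u => σ₁ u * G u) volume 0 x := by
      apply hσG.mono_set
      apply uIcc_subset_uIcc
      · rw [uIcc_of_le zero_le_one]; exact ⟨le_refl 0, zero_le_one⟩
      · rw [uIcc_of_le zero_le_one]; exact ⟨hx0, hx1⟩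
    have h2 : IntervalIntegrable (fun u => σ₁ u * G u) volume x t := by
      apply hσG.mono_set
      apply uIcc_subset_uIcc
      · rw [uIcc_of_le zero_le_one]; exact ⟨hx0, hx1⟩
      · rw [uIcc_of_le zero_le_one]; exact ⟨hx0.trans ht.1, ht.2⟩
    rw [hFeq t, hFeq x, intervalIntegral.integral_add_adjacent_intervals h1 h2]
  have hcontP : ContinuousOn (fun t => ∫ u in x..t, σ₁ u * G u) (uIcc x (1:ℝ)) :=
    intervalIntegral.continuousOn_primitive_interval' hσGx1 left_mem_uIcc
  have hA : IntervalIntegrable (fun t => h t * F x) volume x 1 := hhx1.mul_const _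
  have hB : IntervalIntegrable (fun t => h t * ∫ u in x..t, σ₁ u * G u) volume x 1 :=
    hhx1.mul_continuousOn hcontP
  have hhIoc : IntegrableOn h (Ioc x 1) volume :=
    (intervalIntegrable_iff_integrableOn_Ioc_of_le hx1).mp hhx1
  have hσGIoc : IntegrableOn (fun u => σ₁ u * G u) (Ioc x 1) volume :=
    (intervalIntegrable_iff_integrableOn_Ioc_of_le hx1).mp hσGx1
  calc (∫ t in x..(1:ℝ), Complex.exp (2*Complex.I*μ*t) * σ₂ t * F t)
      = ∫ t in x..(1:ℝ), (h t * F x + h t * ∫ u in x..t, σ₁ u * G u) := by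
        apply intervalIntegral.integral_congr
        intro t ht
        beta_reduce
        rw [hFdec t ht, hh]
        ring
    _ = (∫ t in x..(1:ℝ), h t * F x)
        + ∫ t in x..(1:ℝ), h t * ∫ u in x..t, σ₁ u * G u := by
        rw [intervalIntegral.integral_add hA hB]
    _ = (∫ t in x..(1:ℝ), h t) * F x
        + ∫ u in x..(1:ℝ), (σ₁ u * G u) * ∫ t in u..(1:ℝ), h t := by
        rw [intervalIntegral.integral_mul_const, tri_fubini hx1 hhIoc hσGIoc]
    _ = (∫ s in x..(1:ℝ), Complex.exp (2*Complex.I*μ*s) * σ₁ s * (G s)^2)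
        + Complex.exp (2*Complex.I*μ*x) * F x * G x := by
        rw [hGe x]
        have : (∫ u in x..(1:ℝ), (σ₁ u * G u) * ∫ t in u..(1:ℝ), h t)
            = ∫ s in x..(1:ℝ), Complex.exp (2*Complex.I*μ*s) * σ₁ s * (G s)^2 := by
          apply intervalIntegral.integral_congr
          intro u _
          beta_reduce
          rw [hGe u]
          ring
        rw [this]
        ring
end
end

section
/- For every μ ∈ ℂ and every x ∈ [0,1], the following exact identity holds: ∫₀ˣ e^{2iμ(x−t)} σ₁(t) (K₂e)(t) dt = ∫₀ˣ e^{2iμ(x−s)} σ₂(s) (∫₀ˢ e^{2iμ(s−t)} σ₁(t) dt)² ds + (K₂e)(x) · ∫₀ˣ e^{2iμ(x−t)} σ₁(t) dt. -/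
open MeasureTheory Set
open scoped ENNReal

noncomputable section

/-!
Write `c = 2iμ`, `b(t) = e^{-ct} σ₁(t)` and `B(s) = ∫₀ˢ b`. Since
`∫₀ˢ e^{c(s-t)} σ₁(t) dt = e^{cs} B(s)`, we have `(K₂e)(t) = ∫ₜ¹ h` with `h = σ₂ e^{c·} B`; the
left side is `e^{cx} ∫₀ˣ b(t) ∫ₜ¹ h(u) du dt` and the right side is
`e^{cx} (∫₀ˣ B h + B(x) ∫ₓ¹ h)`. These agree after splitting `∫ₜ¹ = ∫ₜˣ + ∫ₓ¹` and exchanging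
the order of integration over the triangle `0 < t < u ≤ x`.
-/

lemma integral_mul_integral_eq_integral_primitive_mul {𝕜 : Type*} [RCLike 𝕜] {a x : ℝ}
    (hax : a ≤ x) {b h : ℝ → 𝕜} (hb : IntervalIntegrable b volume a x)
    (hh : IntervalIntegrable h volume a x) :
    ∫ t in a..x, b t * ∫ u in t..x, h u = ∫ u in a..x, (∫ t in a..u, b t) * h u := by
  rw [intervalIntegrable_iff_integrableOn_Ioc_of_le hax] at hb hh
  set ν := volume.restrict (Ioc a x)
  let F : ℝ → ℝ → 𝕜 := fun t u =>
    {p : ℝ × ℝ | p.1 < p.2}.indicator (fun p => b p.1 * h p.2) (t, u)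
  have hF : Integrable (Function.uncurry F) (ν.prod ν) :=
    (hb.mul_prod hh).indicator (measurableSet_lt measurable_fst measurable_snd)
  have h_inner_u : ∀ t ∈ Ioc a x, ∫ u, F t u ∂ν = b t * ∫ u in t..x, h u := by
    intro t ht
    have : F t = (Ioi t).indicator (fun u => b t * h u) := by
      ext u; simp [F, indicator_apply]
    rw [this, integral_indicator measurableSet_Ioi, Measure.restrict_restrict measurableSet_Ioi,
      inter_comm, Ioc_inter_Ioi, sup_eq_right.2 ht.1.le, integral_const_mul,
      intervalIntegral.integral_of_le ht.2]
  have h_inner_t : ∀ u ∈ Ioc a x, ∫ t, F t u ∂ν = (∫ t in a..u, b t) * h u := by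
    intro u hu
    have : (fun t => F t u) = (Iio u).indicator (fun t => b t * h u) := by
      ext t; simp [F, indicator_apply]
    have hset : Iio u ∩ Ioc a x = Ioo a u := by
      ext t; simp only [mem_inter_iff, mem_Iio, mem_Ioc, mem_Ioo]
      exact ⟨fun h => ⟨h.2.1, h.1⟩, fun h => ⟨h.2, h.1, h.2.le.trans hu.2⟩⟩
    rw [this, integral_indicator measurableSet_Iio, Measure.restrict_restrict measurableSet_Iio,
      hset, integral_mul_const, ← integral_Ioc_eq_integral_Ioo,
      intervalIntegral.integral_of_le hu.1.le]
  rw [intervalIntegral.integral_of_le hax, intervalIntegral.integral_of_le hax,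
    ← setIntegral_congr_fun measurableSet_Ioc h_inner_u,
    ← setIntegral_congr_fun measurableSet_Ioc h_inner_t]
  exact integral_integral_swap hF

lemma integral_mul_integral_eq_integral_primitive_mul_add {𝕜 : Type*} [RCLike 𝕜] {a x c : ℝ}
    (hax : a ≤ x) (hxc : x ≤ c) {b h : ℝ → 𝕜} (hb : IntervalIntegrable b volume a x)
    (hh : IntervalIntegrable h volume a c) :
    ∫ t in a..x, b t * ∫ u in t..c, h u
      = (∫ u in a..x, (∫ t in a..u, b t) * h u) + (∫ t in a..x, b t) * ∫ u in x..c, h u := by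
  have hsub : uIcc a x ⊆ uIcc a c := uIcc_subset_uIcc left_mem_uIcc
    (by rw [uIcc_of_le (hax.trans hxc)]; exact ⟨hax, hxc⟩)
  have hhx : IntervalIntegrable h volume a x := hh.mono_set hsub
  have hsplit : ∀ t ∈ uIcc a x,
      b t * ∫ u in t..c, h u = b t * (∫ u in t..x, h u) + b t * ∫ u in x..c, h u := by
    intro t ht
    rw [← mul_add, intervalIntegral.integral_add_adjacent_intervals]
    · exact hh.mono_set (uIcc_subset_uIcc (hsub ht) (hsub right_mem_uIcc))
    · exact hh.mono_set (uIcc_subset_uIcc (hsub right_mem_uIcc) right_mem_uIcc)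
  have hprim : ContinuousOn (fun t => ∫ u in t..x, h u) (uIcc a x) :=
    intervalIntegral.continuousOn_primitive_interval_left ((intervalIntegrable_iff').1 hhx)
  rw [intervalIntegral.integral_congr hsplit, intervalIntegral.integral_add
    (hb.mul_continuousOn hprim) (hb.mul_continuousOn continuousOn_const),
    intervalIntegral.integral_mul_const,
    integral_mul_integral_eq_integral_primitive_mul hax hb hhx]

lemma integral_exp_mul_sub_mul (c : ℂ) (s : ℝ) (f : ℝ → ℂ) (a b : ℝ) :
    ∫ t in a..b, Complex.exp (c * (s - t)) * f t
      = Complex.exp (c * s) * ∫ t in a..b, Complex.exp (-(c * t)) * f t := by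
  rw [← intervalIntegral.integral_const_mul]
  congr with t
  rw [mul_sub, sub_eq_add_neg, Complex.exp_add, mul_assoc]

theorem integral_exp_mul_K2_eFun_eq {σ₁ σ₂ : ℝ → ℂ}
    (hσ₁ : IntervalIntegrable σ₁ volume 0 1) (hσ₂ : IntervalIntegrable σ₂ volume 0 1)
    (μ : ℂ) {x : ℝ} (hx : x ∈ Icc (0:ℝ) 1) :
    (∫ t in (0:ℝ)..x, Complex.exp (2*Complex.I*μ*(x - t)) * σ₁ t * K2 σ₁ σ₂ μ eFun t)
      = (∫ s in (0:ℝ)..x, Complex.exp (2*Complex.I*μ*(x - s)) * σ₂ s *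
          (∫ t in (0:ℝ)..s, Complex.exp (2*Complex.I*μ*(s - t)) * σ₁ t)^2)
        + K2 σ₁ σ₂ μ eFun x *
          ∫ t in (0:ℝ)..x, Complex.exp (2*Complex.I*μ*(x - t)) * σ₁ t := by
  set c := 2 * Complex.I * μ with hc
  set b : ℝ → ℂ := fun t => Complex.exp (-(c * t)) * σ₁ t
  set B : ℝ → ℂ := fun s => ∫ t in (0:ℝ)..s, b t
  have hconv (s : ℝ) : ∫ t in (0:ℝ)..s, Complex.exp (c * (s - t)) * σ₁ t
      = Complex.exp (c * s) * B s := integral_exp_mul_sub_mul c s σ₁ 0 s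
  set h : ℝ → ℂ := fun u => σ₂ u * (Complex.exp (c * u) * B u)
  have hK2 (t : ℝ) : K2 σ₁ σ₂ μ eFun t = ∫ u in t..1, h u := by
    simp only [K2, eFun, mul_one, ← hc, hconv, h]
  have hb : IntervalIntegrable b volume 0 1 := hσ₁.continuousOn_mul (by fun_prop)
  have hh : IntervalIntegrable h volume 0 1 := hσ₂.mul_continuousOn
    ((by fun_prop : Continuous fun u : ℝ => Complex.exp (c * u)).continuousOn.mul
      (intervalIntegral.continuousOn_primitive_interval' hb left_mem_uIcc))
  have hsq (s : ℝ) : Complex.exp (c * (x - s)) * σ₂ s * (Complex.exp (c * s) * B s) ^ 2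
      = Complex.exp (c * x) * (B s * h s) := by
    have hexp : Complex.exp (c * (x - s)) * Complex.exp (c * s) = Complex.exp (c * x) := by
      rw [← Complex.exp_add]; ring_nf
    linear_combination (σ₂ s * Complex.exp (c * s) * B s ^ 2) * hexp
  calc _ = Complex.exp (c * x) * ∫ t in (0:ℝ)..x, b t * ∫ u in t..1, h u := by
        simp only [mul_assoc, integral_exp_mul_sub_mul, hK2, b]
    _ = Complex.exp (c * x) * ((∫ u in (0:ℝ)..x, B u * h u) + B x * ∫ u in x..1, h u) := by
        rw [integral_mul_integral_eq_integral_primitive_mul_add hx.1 hx.2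
          (hb.mono_set (uIcc_subset_uIcc left_mem_uIcc (by rwa [uIcc_of_le zero_le_one])))
          hh]
    _ = _ := by
        simp only [hconv, hsq, intervalIntegral.integral_const_mul, hK2]
        ring

theorem stmt2_general
    (p : ℝ≥0∞) (hp1 : 1 ≤ p)
    (σ₁ σ₂ : ℝ → ℂ)
    (hσ₁ : MemLp σ₁ p (volume.restrict (Icc (0:ℝ) 1)))
    (hσ₂ : MemLp σ₂ p (volume.restrict (Icc (0:ℝ) 1))) :
    ∀ μ : ℂ, ∀ x ∈ Icc (0:ℝ) 1,
      (∫ t in (0:ℝ)..x, Complex.exp (2*Complex.I*μ*(x - t)) * σ₁ t * K2 σ₁ σ₂ μ eFun t)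
        = (∫ s in (0:ℝ)..x, Complex.exp (2*Complex.I*μ*(x - s)) * σ₂ s *
            (∫ t in (0:ℝ)..s, Complex.exp (2*Complex.I*μ*(s - t)) * σ₁ t)^2)
          + K2 σ₁ σ₂ μ eFun x *
            ∫ t in (0:ℝ)..x, Complex.exp (2*Complex.I*μ*(x - t)) * σ₁ t := by
  have hint {σ : ℝ → ℂ} (hσ : MemLp σ p (volume.restrict (Icc (0:ℝ) 1))) :
      IntervalIntegrable σ volume 0 1 :=
    (intervalIntegrable_iff_integrableOn_Icc_of_le zero_le_one).2 (hσ.integrable hp1)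
  exact fun μ _ hx => integral_exp_mul_K2_eFun_eq (hint hσ₁) (hint hσ₂) μ hx

/-- exact identity for `∫₀ˣ e^{2iμ(x−t)} σ₁(t) (K₂e)(t) dt`. -/
theorem stmt2
    (p : ℝ≥0∞) (hp1 : 1 ≤ p) (hp2 : p < 2)
    (σ₁ σ₂ : ℝ → ℂ) (hσ₁m : Measurable σ₁) (hσ₂m : Measurable σ₂)
    (hσ₁ : MemLp σ₁ p (volume.restrict (Icc (0:ℝ) 1)))
    (hσ₂ : MemLp σ₂ p (volume.restrict (Icc (0:ℝ) 1))) :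
    ∀ μ : ℂ, ∀ x ∈ Icc (0:ℝ) 1,
      (∫ t in (0:ℝ)..x, Complex.exp (2*Complex.I*μ*(x - t)) * σ₁ t * K2 σ₁ σ₂ μ eFun t)
        = (∫ s in (0:ℝ)..x, Complex.exp (2*Complex.I*μ*(x - s)) * σ₂ s *
            (∫ t in (0:ℝ)..s, Complex.exp (2*Complex.I*μ*(s - t)) * σ₁ t)^2)
          + K2 σ₁ σ₂ μ eFun x *
            ∫ t in (0:ℝ)..x, Complex.exp (2*Complex.I*μ*(x - t)) * σ₁ t :=
  stmt2_general p hp1 σ₁ σ₂ hσ₁ hσ₂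
end
end

section
/- Let r ≥ 0. Then for every μ ∈ ℂ with Im μ > −r, every j ∈ {1,2}, and every x ∈ [0,1], one has |(K_j² e)(x)| ≤ (e^{2r} + 1/2) ‖σ‖_{L¹[0,1]} γ̃(μ); in particular there is a constant c > 0, depending only on r, σ₁, σ₂, with sup_{x∈[0,1]} |(K_j² e)(x)| ≤ c γ̃(μ) for all such μ. -/
open MeasureTheory Set
open scoped ENNReal

noncomputable section

/-!
Let `G = expTail σ₂ μ`, so that `|G| = γ₀₂` and `K₁e(s) = ∫₀ˢ σ₁ G`. Writing
`K₁e(s) = K₁e(t) + ∫ₜˢ σ₁ G` and swapping the order of integration gives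
`∫ₜ¹ e^{2iμ(s-t)} σ₂(s) K₁e(s) ds = G(t) K₁e(t) + ∫ₜ¹ σ₁(u) e^{2iμ(u-t)} G(u)² du`.
For `Im μ > -r` the exponential is at most `e^{2r}` on `[0,1]`, so the last integral is at most
`e^{2r} J` with `J = ∫₀¹ |σ₁| γ₀₂²`. With `φ = |σ₁| γ₀₂` the first term contributes at most
`∫₀¹ φ(t) ∫₀ᵗ φ = (∫₀¹ φ)² / 2 ≤ ‖σ₁‖₁ J / 2` (Cauchy–Schwarz). The reflection `x ↦ 1 - x`
exchanges `K₁` and `K₂` (and `σ₁` and `σ₂`), which turns the bound for `K₁` into the one for `K₂`.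
-/

theorem integral_mul_primitive_swap {𝕜 : Type*} [RCLike 𝕜] {g h : ℝ → 𝕜} {a b : ℝ}
    (hab : a ≤ b) (hg : IntervalIntegrable g volume a b) (hh : IntervalIntegrable h volume a b) :
    (∫ s in a..b, h s * ∫ u in a..s, g u) = ∫ u in a..b, g u * ∫ s in u..b, h s := by
  set ν := volume.restrict (Ioc a b)
  set F : ℝ → ℝ → 𝕜 := fun s u => if u ≤ s then h s * g u else 0
  rw [intervalIntegrable_iff_integrableOn_Ioc_of_le hab] at hg hh
  have hF : Integrable (Function.uncurry F) (ν.prod ν) := by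
    refine ((hh.mul_prod hg).indicator (measurableSet_le measurable_snd measurable_fst)).congr
      (.of_forall fun p => ?_)
    by_cases hp : p.2 ≤ p.1 <;> simp [hp, F, Function.uncurry]
  have hleft : ∀ s ∈ Ioc a b, h s * (∫ u in a..s, g u) = ∫ u, F s u ∂ν := by
    intro s hs
    have hset : Ioc a b ∩ Iic s = Ioc a s := by rw [Ioc_inter_Iic, inf_eq_right.2 hs.2]
    calc h s * (∫ u in a..s, g u) = ∫ u in Ioc a b ∩ Iic s, h s * g u := by
          rw [hset, intervalIntegral.integral_of_le hs.1.le, integral_const_mul]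
      _ = ∫ u, F s u ∂ν := by
          rw [← setIntegral_indicator measurableSet_Iic]
          congr 1 with u
  have hright : ∀ u ∈ Ioc a b, g u * (∫ s in u..b, h s) = ∫ s, F s u ∂ν := by
    intro u hu
    have hset : Ioc a b ∩ Ici u = Icc u b := by
      ext
      simp only [mem_inter_iff, mem_Ioc, mem_Icc, mem_Ici]
      grind
    calc g u * (∫ s in u..b, h s) = ∫ s in Ioc a b ∩ Ici u, h s * g u := by
          rw [hset, integral_Icc_eq_integral_Ioc, intervalIntegral.integral_of_le hu.2,
            integral_mul_const, mul_comm]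
      _ = ∫ s, F s u ∂ν := by
          rw [← setIntegral_indicator measurableSet_Ici]
          congr 1 with s
  rw [intervalIntegral.integral_of_le hab, intervalIntegral.integral_of_le hab,
    setIntegral_congr_fun measurableSet_Ioc hleft, setIntegral_congr_fun measurableSet_Ioc hright]
  exact integral_integral_swap hF

theorem integral_mul_primitive_self {𝕜 : Type*} [RCLike 𝕜] {φ : ℝ → 𝕜} {a b : ℝ}
    (hab : a ≤ b) (hφ : IntervalIntegrable φ volume a b) :
    (∫ t in a..b, φ t * ∫ u in a..t, φ u) = (∫ t in a..b, φ t) ^ 2 / 2 := by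
  have hsub : ∀ {c d}, c ∈ uIcc a b → d ∈ uIcc a b → IntervalIntegrable φ volume c d :=
    fun hc hd => hφ.mono_set (uIcc_subset_uIcc hc hd)
  have hprim : IntervalIntegrable (fun t => φ t * ∫ u in a..t, φ u) volume a b :=
    hφ.mul_continuousOn
      (intervalIntegral.continuousOn_primitive_interval ((intervalIntegrable_iff' (f := φ)).mp hφ))
  have hswap : (∫ t in a..b, φ t * ∫ u in a..t, φ u)
      = ∫ t in a..b, (φ t * ∫ s in a..b, φ s) - φ t * ∫ u in a..t, φ u := by
    rw [integral_mul_primitive_swap hab hφ hφ]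
    refine intervalIntegral.integral_congr fun t ht => ?_
    rw [← intervalIntegral.integral_add_adjacent_intervals (hsub left_mem_uIcc ht)
      (hsub ht right_mem_uIcc)]
    ring
  rw [intervalIntegral.integral_sub (hφ.mul_const _) hprim, intervalIntegral.integral_mul_const]
    at hswap
  linear_combination hswap / 2

theorem sq_integral_mul_le_integral_mul_integral_mul_sq {α : Type*} [MeasurableSpace α]
    {ν : Measure α} {f g : α → ℝ} (hf0 : 0 ≤ᵐ[ν] f) (hf : Integrable f ν)
    (hfg : Integrable (fun x => f x * g x) ν) (hfg2 : Integrable (fun x => f x * g x ^ 2) ν) :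
    (∫ x, f x * g x ∂ν) ^ 2 ≤ (∫ x, f x ∂ν) * ∫ x, f x * g x ^ 2 ∂ν := by
  have hquad : ∀ c : ℝ, 0 ≤ (∫ x, f x ∂ν) * (c * c) + (-2 * ∫ x, f x * g x ∂ν) * c
      + ∫ x, f x * g x ^ 2 ∂ν := by
    intro c
    have hexpand : ∫ x, f x * (g x - c) ^ 2 ∂ν
        = (∫ x, f x ∂ν) * (c * c) + (-2 * ∫ x, f x * g x ∂ν) * c + ∫ x, f x * g x ^ 2 ∂ν := by
      calc ∫ x, f x * (g x - c) ^ 2 ∂ν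
          = ∫ x, (f x * (c * c) + -2 * c * (f x * g x) + f x * g x ^ 2) ∂ν := by
            congr 1 with x; ring
        _ = _ := by
            rw [integral_add ?_ hfg2, integral_add (hf.mul_const _) (hfg.const_mul _),
              integral_mul_const, integral_const_mul]
            · ring
            · exact (hf.mul_const _).add (hfg.const_mul _)
    rw [← hexpand]
    exact integral_nonneg_of_ae (hf0.mono fun x hx => mul_nonneg hx (sq_nonneg _))
  have := discrim_le_zero hquad
  rw [discrim] at this
  nlinarith

theorem MeasureTheory.IntegrableOn.comp_one_sub {E : Type*} [NormedAddCommGroup E] {f : ℝ → E}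
    (hf : IntegrableOn f (Icc 0 1)) : IntegrableOn (fun t => f (1 - t)) (Icc 0 1) := by
  have := ((intervalIntegrable_iff_integrableOn_Icc_of_le zero_le_one).2 hf).comp_sub_left 1
  simpa [intervalIntegrable_iff_integrableOn_Icc_of_le] using this.symm

theorem norm_cexp_two_mul_I_mul_le {μ : ℂ} {r : ℝ} (hr : 0 ≤ r) (hμ : -r < μ.im) {u : ℝ}
    (hu₀ : 0 ≤ u) (hu₁ : u ≤ 1) :
    ‖Complex.exp (2 * Complex.I * μ * u)‖ ≤ Real.exp (2 * r) := by
  rw [Complex.norm_exp, Real.exp_le_exp]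
  have hre : (2 * Complex.I * μ * u).re = -(2 * μ.im * u) := by simp [Complex.mul_re]
  rw [hre]
  nlinarith

def expTail (σ : ℝ → ℂ) (μ : ℂ) (t : ℝ) : ℂ :=
  ∫ s in t..(1:ℝ), Complex.exp (2 * Complex.I * μ * (s - t)) * σ s

theorem gamma02_eq_norm_expTail (σ : ℝ → ℂ) (μ : ℂ) (t : ℝ) :
    gamma02 σ μ t = ‖expTail σ μ t‖ := rfl

theorem integral_exp_mul_eq_exp_mul_expTail (σ : ℝ → ℂ) (μ : ℂ) (t u : ℝ) :
    ∫ s in u..(1:ℝ), Complex.exp (2 * Complex.I * μ * (s - t)) * σ s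
      = Complex.exp (2 * Complex.I * μ * (u - t)) * expTail σ μ u := by
  rw [expTail, ← intervalIntegral.integral_const_mul]
  refine intervalIntegral.integral_congr fun s _ => ?_
  rw [← mul_assoc, ← Complex.exp_add]
  ring_nf

theorem continuousOn_expTail {σ : ℝ → ℂ} (μ : ℂ) (hσ : IntegrableOn σ (Icc 0 1)) :
    ContinuousOn (expTail σ μ) (Icc 0 1) := by
  -- `expTail σ μ t = e^{-2iμt} ∫ₜ¹ e^{2iμs} σ s ds`: a continuous factor times a primitive
  have hexp : Continuous fun t : ℝ => Complex.exp (-(2 * Complex.I * μ * t)) := by fun_prop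
  have hprim : ContinuousOn (fun t => ∫ s in t..(1:ℝ),
      Complex.exp (2 * Complex.I * μ * (s - (0:ℝ))) * σ s) (Icc 0 1) := by
    have := intervalIntegral.continuousOn_primitive_interval_left (μ := volume)
      (a := 0) (b := 1) (f := fun s : ℝ => Complex.exp (2 * Complex.I * μ * (s - (0:ℝ))) * σ s)
      (by rw [uIcc_of_le zero_le_one]; exact hσ.continuousOn_mul (by fun_prop) isCompact_Icc)
    rwa [uIcc_of_le zero_le_one] at this
  refine (hexp.continuousOn.mul hprim).congr fun t _ => ?_
  rw [Pi.mul_apply, integral_exp_mul_eq_exp_mul_expTail, ← mul_assoc, ← Complex.exp_add]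
  simp

section K1

variable {σ₁ σ₂ : ℝ → ℂ} {μ : ℂ}

theorem K1_eFun_eq (x : ℝ) : K1 σ₁ σ₂ μ eFun x = ∫ u in (0:ℝ)..x, σ₁ u * expTail σ₂ μ u := by
  simp only [K1, eFun, mul_one, expTail]

theorem norm_K1_eFun_le {x : ℝ} (hx : 0 ≤ x) :
    ‖K1 σ₁ σ₂ μ eFun x‖ ≤ ∫ u in (0:ℝ)..x, ‖σ₁ u‖ * gamma02 σ₂ μ u := by
  rw [K1_eFun_eq]
  simpa only [norm_mul, gamma02_eq_norm_expTail] using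
    intervalIntegral.norm_integral_le_integral_norm (f := fun u => σ₁ u * expTail σ₂ μ u) hx

theorem K1_inner_K1_eFun_eq (h₁ : IntegrableOn σ₁ (Icc 0 1)) (h₂ : IntegrableOn σ₂ (Icc 0 1))
    {t : ℝ} (ht : t ∈ Icc (0:ℝ) 1) :
    ∫ s in t..(1:ℝ), Complex.exp (2 * Complex.I * μ * (s - t)) * σ₂ s * K1 σ₁ σ₂ μ eFun s
      = expTail σ₂ μ t * K1 σ₁ σ₂ μ eFun t + ∫ u in t..(1:ℝ),
          σ₁ u * expTail σ₂ μ u * (Complex.exp (2 * Complex.I * μ * (u - t)) * expTail σ₂ μ u) := by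
  set G := expTail σ₂ μ
  set E : ℝ → ℂ := fun s => Complex.exp (2 * Complex.I * μ * (s - t)) * σ₂ s
  have hsub : uIcc t 1 ⊆ Icc 0 1 := uIcc_subset_Icc ht ⟨zero_le_one, le_rfl⟩
  have hσG : IntegrableOn (fun u => σ₁ u * G u) (Icc 0 1) :=
    h₁.mul_continuousOn (continuousOn_expTail μ h₂) isCompact_Icc
  have hE : IntervalIntegrable E volume t 1 :=
    ((h₂.continuousOn_mul (by fun_prop) isCompact_Icc).mono_set hsub).intervalIntegrable
  have hσG' : IntervalIntegrable (fun u => σ₁ u * G u) volume t 1 :=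
    (hσG.mono_set hsub).intervalIntegrable
  have hsplit : ∀ s ∈ uIcc t 1,
      K1 σ₁ σ₂ μ eFun s = K1 σ₁ σ₂ μ eFun t + ∫ u in t..s, σ₁ u * G u := fun s hs => by
    rw [K1_eFun_eq, K1_eFun_eq, intervalIntegral.integral_add_adjacent_intervals]
    · exact (hσG.mono_set (uIcc_subset_Icc ⟨le_rfl, zero_le_one⟩ ht)).intervalIntegrable
    · exact (hσG.mono_set (uIcc_subset_Icc ht (hsub hs))).intervalIntegrable
  calc ∫ s in t..(1:ℝ), E s * K1 σ₁ σ₂ μ eFun s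
      = ∫ s in t..(1:ℝ), E s * K1 σ₁ σ₂ μ eFun t + E s * ∫ u in t..s, σ₁ u * G u :=
        intervalIntegral.integral_congr fun s hs => by rw [hsplit s hs, mul_add]
    _ = G t * K1 σ₁ σ₂ μ eFun t + ∫ s in t..(1:ℝ), E s * ∫ u in t..s, σ₁ u * G u := by
        rw [intervalIntegral.integral_add (hE.mul_const _) (hE.mul_continuousOn
          (intervalIntegral.continuousOn_primitive_interval' hσG' left_mem_uIcc)),
          intervalIntegral.integral_mul_const]
        rfl
    _ = G t * K1 σ₁ σ₂ μ eFun t + ∫ u in t..(1:ℝ), σ₁ u * G u * ∫ s in u..(1:ℝ), E s := by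
        rw [integral_mul_primitive_swap ht.2 hσG' hE]
    _ = _ := by simp only [E, integral_exp_mul_eq_exp_mul_expTail]; rfl

theorem norm_K1_inner_K1_eFun_le (h₁ : IntegrableOn σ₁ (Icc 0 1))
    (h₂ : IntegrableOn σ₂ (Icc 0 1)) {r : ℝ} (hr : 0 ≤ r) (hμ : -r < μ.im)
    {t : ℝ} (ht : t ∈ Icc (0:ℝ) 1) :
    ‖∫ s in t..(1:ℝ), Complex.exp (2 * Complex.I * μ * (s - t)) * σ₂ s * K1 σ₁ σ₂ μ eFun s‖
      ≤ gamma02 σ₂ μ t * (∫ u in (0:ℝ)..t, ‖σ₁ u‖ * gamma02 σ₂ μ u)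
        + Real.exp (2 * r) * ∫ u in (0:ℝ)..1, ‖σ₁ u‖ * gamma02 σ₂ μ u ^ 2 := by
  have hJ : IntegrableOn (fun u => Real.exp (2 * r) * (‖σ₁ u‖ * gamma02 σ₂ μ u ^ 2)) (Icc 0 1) :=
    (IntegrableOn.mul_continuousOn h₁.norm ((continuousOn_expTail μ h₂).norm.pow 2)
      isCompact_Icc).const_mul _
  rw [K1_inner_K1_eFun_eq h₁ h₂ ht]
  refine (norm_add_le _ _).trans (add_le_add ?_ ?_)
  · rw [norm_mul, gamma02_eq_norm_expTail]
    exact mul_le_mul_of_nonneg_left (norm_K1_eFun_le ht.1) (norm_nonneg _)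
  calc _ ≤ ∫ u in t..(1:ℝ), Real.exp (2 * r) * (‖σ₁ u‖ * gamma02 σ₂ μ u ^ 2) := by
        refine intervalIntegral.norm_integral_le_of_norm_le ht.2 (.of_forall fun u hu => ?_)
          (hJ.mono_set (uIcc_subset_Icc ht ⟨zero_le_one, le_rfl⟩)).intervalIntegrable
        have hE := norm_cexp_two_mul_I_mul_le hr hμ (u := u - t) (by linarith [hu.1])
          (by linarith [hu.2, ht.1])
        rw [Complex.ofReal_sub] at hE
        rw [gamma02_eq_norm_expTail, norm_mul, norm_mul, norm_mul]
        calc _ ≤ ‖σ₁ u‖ * ‖expTail σ₂ μ u‖ * (Real.exp (2 * r) * ‖expTail σ₂ μ u‖) := by gcongr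
          _ = _ := by ring
    _ ≤ ∫ u in (0:ℝ)..1, Real.exp (2 * r) * (‖σ₁ u‖ * gamma02 σ₂ μ u ^ 2) :=
        intervalIntegral.integral_mono_interval ht.1 ht.2 le_rfl (.of_forall fun u => by positivity)
          (hJ.mono_set (uIcc_subset_Icc (left_mem_Icc.2 zero_le_one)
            (right_mem_Icc.2 zero_le_one))).intervalIntegrable
    _ = _ := intervalIntegral.integral_const_mul _ _

theorem sq_integral_norm_mul_gamma02_le (h₁ : IntegrableOn σ₁ (Icc 0 1))
    (h₂ : IntegrableOn σ₂ (Icc 0 1)) :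
    (∫ u in (0:ℝ)..1, ‖σ₁ u‖ * gamma02 σ₂ μ u) ^ 2
      ≤ (∫ u in (0:ℝ)..1, ‖σ₁ u‖) * ∫ u in (0:ℝ)..1, ‖σ₁ u‖ * gamma02 σ₂ μ u ^ 2 := by
  have hG : ContinuousOn (gamma02 σ₂ μ) (Icc 0 1) := (continuousOn_expTail μ h₂).norm
  have hIoc : ∀ {f : ℝ → ℝ}, IntegrableOn f (Icc 0 1) → IntegrableOn f (Ioc 0 1) :=
    fun hf => hf.mono_set Ioc_subset_Icc_self
  simp only [intervalIntegral.integral_of_le zero_le_one]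
  exact sq_integral_mul_le_integral_mul_integral_mul_sq (.of_forall fun _ => norm_nonneg _)
    (hIoc h₁.norm) (hIoc (IntegrableOn.mul_continuousOn h₁.norm hG isCompact_Icc))
    (hIoc (IntegrableOn.mul_continuousOn h₁.norm (hG.pow 2) isCompact_Icc))

theorem norm_K1_K1_eFun_le (h₁ : IntegrableOn σ₁ (Icc 0 1))
    (h₂ : IntegrableOn σ₂ (Icc 0 1)) {r : ℝ} (hr : 0 ≤ r) (hμ : -r < μ.im)
    {x : ℝ} (hx : x ∈ Icc (0:ℝ) 1) :
    ‖K1 σ₁ σ₂ μ (K1 σ₁ σ₂ μ eFun) x‖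
      ≤ (Real.exp (2 * r) + 1 / 2) * (∫ t in (0:ℝ)..1, ‖σ₁ t‖)
        * ∫ s in (0:ℝ)..1, ‖σ₁ s‖ * gamma02 σ₂ μ s ^ 2 := by
  set φ : ℝ → ℝ := fun u => ‖σ₁ u‖ * gamma02 σ₂ μ u
  set N := ∫ t in (0:ℝ)..1, ‖σ₁ t‖
  set J := ∫ s in (0:ℝ)..1, ‖σ₁ s‖ * gamma02 σ₂ μ s ^ 2
  set B : ℝ → ℝ := fun t => φ t * (∫ u in (0:ℝ)..t, φ u) + Real.exp (2 * r) * J * ‖σ₁ t‖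
  have h01 : uIcc (0:ℝ) 1 = Icc 0 1 := uIcc_of_le zero_le_one
  have hI : ∀ {f : ℝ → ℝ}, IntegrableOn f (Icc 0 1) → IntervalIntegrable f volume 0 1 :=
    (intervalIntegrable_iff_integrableOn_Icc_of_le zero_le_one).2
  have hφ : IntegrableOn φ (Icc 0 1) :=
    IntegrableOn.mul_continuousOn h₁.norm (continuousOn_expTail μ h₂).norm isCompact_Icc
  have hφΦ : IntervalIntegrable (fun t => φ t * ∫ u in (0:ℝ)..t, φ u) volume 0 1 :=
    (hI hφ).mul_continuousOn (intervalIntegral.continuousOn_primitive_interval (h01 ▸ hφ))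
  have hB : IntervalIntegrable B volume 0 1 := hφΦ.add ((hI h₁.norm).const_mul _)
  have hB0 : ∀ t ∈ Ioc (0:ℝ) 1, 0 ≤ B t := fun t ht =>
    have hφ0 : ∀ u, 0 ≤ φ u := fun u => mul_nonneg (norm_nonneg _) (norm_nonneg _)
    have hJ0 : 0 ≤ J := intervalIntegral.integral_nonneg zero_le_one fun u _ => by positivity
    add_nonneg (mul_nonneg (hφ0 t) (intervalIntegral.integral_nonneg ht.1.le fun u _ => hφ0 u))
      (by positivity)
  have hbound : ∀ t ∈ Icc (0:ℝ) 1, ‖σ₁ t * ∫ s in t..(1:ℝ),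
      Complex.exp (2 * Complex.I * μ * (s - t)) * σ₂ s * K1 σ₁ σ₂ μ eFun s‖ ≤ B t := fun t ht =>
    calc _ ≤ ‖σ₁ t‖ * (gamma02 σ₂ μ t * (∫ u in (0:ℝ)..t, φ u) + Real.exp (2 * r) * J) := by
          rw [norm_mul]
          exact mul_le_mul_of_nonneg_left (norm_K1_inner_K1_eFun_le h₁ h₂ hr hμ ht) (norm_nonneg _)
      _ = B t := by ring
  calc ‖K1 σ₁ σ₂ μ (K1 σ₁ σ₂ μ eFun) x‖ ≤ ∫ t in (0:ℝ)..x, B t :=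
        intervalIntegral.norm_integral_le_of_norm_le hx.1
          (.of_forall fun t ht => hbound t ⟨ht.1.le, ht.2.trans hx.2⟩)
          (hB.mono_set (uIcc_subset_uIcc_left (h01 ▸ hx)))
    _ ≤ ∫ t in (0:ℝ)..1, B t := intervalIntegral.integral_mono_interval le_rfl hx.1 hx.2
        ((ae_restrict_mem measurableSet_Ioc).mono hB0) hB
    _ = (∫ u in (0:ℝ)..1, φ u) ^ 2 / 2 + Real.exp (2 * r) * J * N := by
        rw [intervalIntegral.integral_add hφΦ ((hI h₁.norm).const_mul _),
          intervalIntegral.integral_const_mul, integral_mul_primitive_self zero_le_one (hI hφ)]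
    _ ≤ N * J / 2 + Real.exp (2 * r) * J * N := by
        gcongr
        exact sq_integral_norm_mul_gamma02_le h₁ h₂
    _ = (Real.exp (2 * r) + 1 / 2) * N * J := by ring

end K1

theorem K2_eq_K1_comp_one_sub (σ₁ σ₂ : ℝ → ℂ) (μ : ℂ) (z : ℝ → ℂ) (x : ℝ) :
    K2 σ₁ σ₂ μ z x
      = K1 (fun t => σ₂ (1 - t)) (fun t => σ₁ (1 - t)) μ (fun t => z (1 - t)) (1 - x) := by
  set g : ℝ → ℂ := fun t => σ₂ t * ∫ s in (0:ℝ)..t,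
    Complex.exp (2 * Complex.I * μ * (t - s)) * σ₁ s * z s
  have hinner : ∀ t : ℝ, σ₂ (1 - t) * ∫ s in t..(1:ℝ),
      Complex.exp (2 * Complex.I * μ * (s - t)) * σ₁ (1 - s) * z (1 - s) = g (1 - t) := by
    intro t
    have := intervalIntegral.integral_comp_sub_left (a := t) (b := 1)
      (fun s => Complex.exp (2 * Complex.I * μ * ((1 - t : ℝ) - s)) * σ₁ s * z s) 1
    rw [sub_self] at this
    simp only [g, ← this]
    congr 2 with s
    push_cast
    ring_nf
  simp only [K1, K2, hinner]
  rw [intervalIntegral.integral_comp_sub_left g, sub_sub_cancel, sub_zero]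

theorem gamma02_comp_one_sub (σ : ℝ → ℂ) (μ : ℂ) (x : ℝ) :
    gamma02 (fun t => σ (1 - t)) μ x = gamma01 σ μ (1 - x) := by
  have := intervalIntegral.integral_comp_sub_left (a := x) (b := 1)
    (fun t => Complex.exp (2 * Complex.I * μ * ((1 - x : ℝ) - t)) * σ t) 1
  rw [sub_self] at this
  rw [gamma01, gamma02, ← this]
  congr 2 with t
  push_cast
  ring_nf

theorem K2_K2_eFun_eq (σ₁ σ₂ : ℝ → ℂ) (μ : ℂ) (x : ℝ) :
    K2 σ₁ σ₂ μ (K2 σ₁ σ₂ μ eFun) x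
      = K1 (fun t => σ₂ (1 - t)) (fun t => σ₁ (1 - t)) μ
          (K1 (fun t => σ₂ (1 - t)) (fun t => σ₁ (1 - t)) μ eFun) (1 - x) := by
  simp only [K2_eq_K1_comp_one_sub σ₁ σ₂ μ _, sub_sub_cancel]
  rfl

theorem norm_K2_K2_eFun_le {σ₁ σ₂ : ℝ → ℂ} {μ : ℂ} (h₁ : IntegrableOn σ₁ (Icc 0 1))
    (h₂ : IntegrableOn σ₂ (Icc 0 1)) {r : ℝ} (hr : 0 ≤ r) (hμ : -r < μ.im)
    {x : ℝ} (hx : x ∈ Icc (0:ℝ) 1) :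
    ‖K2 σ₁ σ₂ μ (K2 σ₁ σ₂ μ eFun) x‖
      ≤ (Real.exp (2 * r) + 1 / 2) * (∫ t in (0:ℝ)..1, ‖σ₂ t‖)
        * ∫ s in (0:ℝ)..1, ‖σ₂ s‖ * gamma01 σ₁ μ s ^ 2 := by
  have h := norm_K1_K1_eFun_le h₂.comp_one_sub h₁.comp_one_sub hr hμ
    ⟨sub_nonneg.2 hx.2, sub_le_self _ hx.1⟩
  rwa [← K2_K2_eFun_eq, funext (gamma02_comp_one_sub σ₁ μ),
    intervalIntegral.integral_comp_sub_left (fun t => ‖σ₂ t‖),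
    intervalIntegral.integral_comp_sub_left (fun s => ‖σ₂ s‖ * gamma01 σ₁ μ s ^ 2),
    sub_self, sub_zero] at h

theorem integral_norm_le_integral_max_norm {σ τ : ℝ → ℂ} (hσ : IntegrableOn σ (Icc 0 1))
    (hτ : IntegrableOn τ (Icc 0 1)) :
    ∫ t in (0:ℝ)..1, ‖σ t‖ ≤ ∫ t in (0:ℝ)..1, max ‖σ t‖ ‖τ t‖ :=
  have hI : ∀ {f : ℝ → ℝ}, IntegrableOn f (Icc 0 1) → IntervalIntegrable f volume 0 1 :=
    (intervalIntegrable_iff_integrableOn_Icc_of_le zero_le_one).2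
  intervalIntegral.integral_mono_on zero_le_one (hI hσ.norm) (hI (hσ.norm.sup hτ.norm))
    fun t _ => le_max_left _ _

theorem gammaT_nonneg (σ₁ σ₂ : ℝ → ℂ) (μ : ℂ) : 0 ≤ gammaT σ₁ σ₂ μ :=
  add_nonneg (intervalIntegral.integral_nonneg zero_le_one fun _ _ => by positivity)
    (intervalIntegral.integral_nonneg zero_le_one fun _ _ => by positivity)

section GammaT

variable {σ₁ σ₂ : ℝ → ℂ} {μ : ℂ} {r : ℝ}

theorem norm_K1_K1_eFun_le_gammaT (h₁ : IntegrableOn σ₁ (Icc 0 1))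
    (h₂ : IntegrableOn σ₂ (Icc 0 1)) (hr : 0 ≤ r) (hμ : -r < μ.im) {x : ℝ}
    (hx : x ∈ Icc (0:ℝ) 1) :
    ‖K1 σ₁ σ₂ μ (K1 σ₁ σ₂ μ eFun) x‖
      ≤ (Real.exp (2 * r) + 1 / 2) * (∫ t in (0:ℝ)..1, max ‖σ₁ t‖ ‖σ₂ t‖) * gammaT σ₁ σ₂ μ :=
  (norm_K1_K1_eFun_le h₁ h₂ hr hμ hx).trans <| mul_le_mul
    (mul_le_mul_of_nonneg_left (integral_norm_le_integral_max_norm h₁ h₂) (by positivity))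
    (le_add_of_nonneg_left (intervalIntegral.integral_nonneg zero_le_one fun _ _ => by positivity))
    (intervalIntegral.integral_nonneg zero_le_one fun _ _ => by positivity)
    (mul_nonneg (by positivity)
      (intervalIntegral.integral_nonneg zero_le_one fun _ _ => by positivity))

theorem norm_K2_K2_eFun_le_gammaT (h₁ : IntegrableOn σ₁ (Icc 0 1))
    (h₂ : IntegrableOn σ₂ (Icc 0 1)) (hr : 0 ≤ r) (hμ : -r < μ.im) {x : ℝ}
    (hx : x ∈ Icc (0:ℝ) 1) :
    ‖K2 σ₁ σ₂ μ (K2 σ₁ σ₂ μ eFun) x‖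
      ≤ (Real.exp (2 * r) + 1 / 2) * (∫ t in (0:ℝ)..1, max ‖σ₁ t‖ ‖σ₂ t‖) * gammaT σ₁ σ₂ μ := by
  simp_rw [max_comm ‖σ₁ _‖]
  exact (norm_K2_K2_eFun_le h₁ h₂ hr hμ hx).trans <| mul_le_mul
    (mul_le_mul_of_nonneg_left (integral_norm_le_integral_max_norm h₂ h₁) (by positivity))
    (le_add_of_nonneg_right (intervalIntegral.integral_nonneg zero_le_one fun _ _ => by positivity))
    (intervalIntegral.integral_nonneg zero_le_one fun _ _ => by positivity)
    (mul_nonneg (by positivity)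
      (intervalIntegral.integral_nonneg zero_le_one fun _ _ => by positivity))

end GammaT

theorem stmt4_general
    (p : ℝ≥0∞) (hp1 : 1 ≤ p)
    (σ₁ σ₂ : ℝ → ℂ)
    (hσ₁ : MemLp σ₁ p (volume.restrict (Icc (0:ℝ) 1)))
    (hσ₂ : MemLp σ₂ p (volume.restrict (Icc (0:ℝ) 1)))
    (r : ℝ) (hr : 0 ≤ r) :
    (∀ μ : ℂ, -r < μ.im → ∀ x ∈ Icc (0:ℝ) 1,
      ‖K1 σ₁ σ₂ μ (K1 σ₁ σ₂ μ eFun) x‖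
          ≤ (Real.exp (2*r) + 1/2) * (∫ t in (0:ℝ)..1, max ‖σ₁ t‖ ‖σ₂ t‖) * gammaT σ₁ σ₂ μ
      ∧ ‖K2 σ₁ σ₂ μ (K2 σ₁ σ₂ μ eFun) x‖
          ≤ (Real.exp (2*r) + 1/2) * (∫ t in (0:ℝ)..1, max ‖σ₁ t‖ ‖σ₂ t‖) * gammaT σ₁ σ₂ μ)
    ∧ ∃ c > 0, ∀ μ : ℂ, -r < μ.im → ∀ x ∈ Icc (0:ℝ) 1,
        ‖K1 σ₁ σ₂ μ (K1 σ₁ σ₂ μ eFun) x‖ ≤ c * gammaT σ₁ σ₂ μ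
        ∧ ‖K2 σ₁ σ₂ μ (K2 σ₁ σ₂ μ eFun) x‖ ≤ c * gammaT σ₁ σ₂ μ := by
  have h₁ : IntegrableOn σ₁ (Icc 0 1) := hσ₁.integrable hp1
  have h₂ : IntegrableOn σ₂ (Icc 0 1) := hσ₂.integrable hp1
  set C := (Real.exp (2 * r) + 1 / 2) * ∫ t in (0:ℝ)..1, max ‖σ₁ t‖ ‖σ₂ t‖
  have hC : 0 ≤ C :=
    mul_nonneg (by positivity)
      (intervalIntegral.integral_nonneg zero_le_one fun _ _ => by positivity)
  have hC' : ∀ μ, C * gammaT σ₁ σ₂ μ ≤ (C + 1) * gammaT σ₁ σ₂ μ := fun μ =>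
    mul_le_mul_of_nonneg_right (le_add_of_nonneg_right zero_le_one) (gammaT_nonneg σ₁ σ₂ μ)
  refine ⟨fun μ hμ x hx => ⟨norm_K1_K1_eFun_le_gammaT h₁ h₂ hr hμ hx,
    norm_K2_K2_eFun_le_gammaT h₁ h₂ hr hμ hx⟩, C + 1, by positivity, fun μ hμ x hx => ⟨?_, ?_⟩⟩
  · exact (norm_K1_K1_eFun_le_gammaT h₁ h₂ hr hμ hx).trans (hC' μ)
  · exact (norm_K2_K2_eFun_le_gammaT h₁ h₂ hr hμ hx).trans (hC' μ)

/-- explicit bound for `K_j² e` and the resulting `O(γ̃)` estimate. -/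
theorem stmt4
    (p : ℝ≥0∞) (hp1 : 1 ≤ p) (hp2 : p < 2)
    (σ₁ σ₂ : ℝ → ℂ) (hσ₁m : Measurable σ₁) (hσ₂m : Measurable σ₂)
    (hσ₁ : MemLp σ₁ p (volume.restrict (Icc (0:ℝ) 1)))
    (hσ₂ : MemLp σ₂ p (volume.restrict (Icc (0:ℝ) 1)))
    (r : ℝ) (hr : 0 ≤ r) :
    (∀ μ : ℂ, -r < μ.im → ∀ x ∈ Icc (0:ℝ) 1,
      ‖K1 σ₁ σ₂ μ (K1 σ₁ σ₂ μ eFun) x‖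
          ≤ (Real.exp (2*r) + 1/2) * (∫ t in (0:ℝ)..1, max ‖σ₁ t‖ ‖σ₂ t‖) * gammaT σ₁ σ₂ μ
      ∧ ‖K2 σ₁ σ₂ μ (K2 σ₁ σ₂ μ eFun) x‖
          ≤ (Real.exp (2*r) + 1/2) * (∫ t in (0:ℝ)..1, max ‖σ₁ t‖ ‖σ₂ t‖) * gammaT σ₁ σ₂ μ)
    ∧ ∃ c > 0, ∀ μ : ℂ, -r < μ.im → ∀ x ∈ Icc (0:ℝ) 1,
        ‖K1 σ₁ σ₂ μ (K1 σ₁ σ₂ μ eFun) x‖ ≤ c * gammaT σ₁ σ₂ μ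
        ∧ ‖K2 σ₁ σ₂ μ (K2 σ₁ σ₂ μ eFun) x‖ ≤ c * gammaT σ₁ σ₂ μ :=
  stmt4_general p hp1 σ₁ σ₂ hσ₁ hσ₂ r hr
end
end
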